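/- arXiv:1009.0109 — 3 statements merged into one kernel-verified Lean document; each statement's English description precedes it below -/
import Mathlib

section
/- Let h ∈ M¹(𝒫) and A_t := ∫₀ᵗ h_s ds, and suppose (A_t)_{t∈[0,T]} has independent increments under Ê. Then for every integer n ≥ 1, 2‖h − h^{T/(2n),0}‖_{M¹} ≥ Ê(A_T) + Ê(−A_T), where h^{T/(2n),0} is the block average of h with block size ε = T/(2n). -/
open MeasureTheory Filter
open scoped ENNReal

noncomputable section

variable {Ω : Type*} [MeasurableSpace Ω]

/-- The sublinear expectation `Ê(ξ) = sup_{P ∈ 𝔓} E_P[ξ]` associated with a family `𝔓`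
of probability measures. -/
def sublinearE (𝔓 : Set (Measure Ω)) (ξ : Ω → ℝ) : ℝ :=
  ⨆ P : 𝔓, ∫ ω, ξ ω ∂(P : Measure Ω)

/-- The `M¹` norm `‖η‖_{M¹} = sup_{P ∈ 𝔓} E_P[∫₀ᵀ |η_t| dt]` of a process
`η : [0,T] × Ω → ℝ` (valued in `ℝ≥0∞`). -/
def M1norm (𝔓 : Set (Measure Ω)) (T : ℝ) (η : ℝ → Ω → ℝ) : ℝ≥0∞ :=
  ⨆ P : 𝔓, ∫⁻ ω, (∫⁻ t in Set.Ioc (0:ℝ) T, ENNReal.ofReal |η t ω|) ∂(P : Measure Ω)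

/-- A step process: `η_t(ω) = Σ_{j<N} ξ_j(ω) 1_{(t_j, t_{j+1}]}(t)` for a partition
`0 = t_0 < ⋯ < t_N = T` and bounded measurable `ξ_j`. -/
def IsStepProcess (T : ℝ) (η : ℝ → Ω → ℝ) : Prop :=
  ∃ (N : ℕ) (t : Fin (N + 1) → ℝ) (ξ : Fin N → Ω → ℝ),
    t 0 = 0 ∧ t (Fin.last N) = T ∧ StrictMono t ∧
    (∀ j, Measurable (ξ j)) ∧ (∀ j, ∃ C, ∀ ω, |ξ j ω| ≤ C) ∧
    ∀ s ω, η s ω =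
      ∑ j, ξ j ω * Set.indicator (Set.Ioc (t j.castSucc) (t j.succ)) (fun _ => (1:ℝ)) s

/-- `η ∈ M¹(𝔓)`: a jointly measurable process with finite `M¹` norm which is the
`M¹`-limit of step processes. -/
def MemM1 (𝔓 : Set (Measure Ω)) (T : ℝ) (η : ℝ → Ω → ℝ) : Prop :=
  Measurable (Function.uncurry η) ∧ M1norm 𝔓 T η < ⊤ ∧
    ∀ δ : ℝ≥0∞, 0 < δ → ∃ ζ, IsStepProcess T ζ ∧
      M1norm 𝔓 T (fun t ω => η t ω - ζ t ω) < δ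

/-- The class `C_{l,Lip}` of locally Lipschitz functions with polynomial growth of the
Lipschitz constant. -/
def CLLip {E : Type*} [NormedAddCommGroup E] (φ : E → ℝ) : Prop :=
  ∃ (C : ℝ) (k : ℕ), ∀ x y, |φ x - φ y| ≤ C * (1 + ‖x‖ ^ k + ‖y‖ ^ k) * ‖x - y‖

/-- `Y` is independent of `X` under the sublinear expectation associated with `𝔓`:
`Ê[φ(X,Y)] = Ê[ψ(X)]` with `ψ(x) = Ê[φ(x,Y)]`, for all `φ ∈ C_{l,Lip}` for which the
relevant random variables are integrable under every `P ∈ 𝔓`. -/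
def IndepOf (𝔓 : Set (Measure Ω)) {m n : ℕ}
    (Y : Ω → (Fin n → ℝ)) (X : Ω → (Fin m → ℝ)) : Prop :=
  ∀ φ : (Fin m → ℝ) × (Fin n → ℝ) → ℝ, CLLip φ →
    (∀ P ∈ 𝔓, Integrable (fun ω => φ (X ω, Y ω)) P) →
    (∀ x : Fin m → ℝ, ∀ P ∈ 𝔓, Integrable (fun ω => φ (x, Y ω)) P) →
    (∀ P ∈ 𝔓, Integrable (fun ω => sublinearE 𝔓 (fun ω' => φ (X ω, Y ω'))) P) →
    sublinearE 𝔓 (fun ω => φ (X ω, Y ω)) =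
      sublinearE 𝔓 (fun ω => sublinearE 𝔓 (fun ω' => φ (X ω, Y ω')))

/-- `(X_t)_{t ∈ [0,T]}` has independent increments under `Ê`: for all
`0 ≤ s_0 ≤ ⋯ ≤ s_m ≤ t_0 ≤ ⋯ ≤ t_n ≤ T`, the vector of `t`-increments is independent of
the vector of `s`-increments. -/
def HasIndepIncrements (𝔓 : Set (Measure Ω)) (T : ℝ) (X : ℝ → Ω → ℝ) : Prop :=
  ∀ (m n : ℕ) (s : Fin (m + 1) → ℝ) (t : Fin (n + 1) → ℝ),
    Monotone s → Monotone t → 0 ≤ s 0 → s (Fin.last m) ≤ t 0 → t (Fin.last n) ≤ T →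
    IndepOf 𝔓 (fun ω i => X (t i.succ) ω - X (t i.castSucc) ω)
              (fun ω i => X (s i.succ) ω - X (s i.castSucc) ω)

/-- `ξ` and `ζ` are identically distributed under `Ê`: `Ê[φ(ξ)] = Ê[φ(ζ)]` for every
`φ ∈ C_{l,Lip}` for which both sides are defined. -/
def IdentDistribSub (𝔓 : Set (Measure Ω)) (ξ ζ : Ω → ℝ) : Prop :=
  ∀ φ : ℝ → ℝ, CLLip φ →
    (∀ P ∈ 𝔓, Integrable (fun ω => φ (ξ ω)) P) →
    (∀ P ∈ 𝔓, Integrable (fun ω => φ (ζ ω)) P) →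
    sublinearE 𝔓 (fun ω => φ (ξ ω)) = sublinearE 𝔓 (fun ω => φ (ζ ω))

/-- `(X_t)_{t ∈ [0,T]}` has stationary increments: `X_t − X_s` is identically distributed
as `X_{t−s}` for all `0 ≤ s ≤ t ≤ T`. -/
def HasStationaryIncrements (𝔓 : Set (Measure Ω)) (T : ℝ) (X : ℝ → Ω → ℝ) : Prop :=
  ∀ s t : ℝ, 0 ≤ s → s ≤ t → t ≤ T →
    IdentDistribSub 𝔓 (fun ω => X t ω - X s ω) (X (t - s))

/-- The block average `η^{ε,0}` of a process `η`:
`η^{ε,0}_t = Σ_{k=1}^{k_ε−1} (ε⁻¹ ∫_{(k−1)ε}^{kε} η_s ds) 1_{(kε,(k+1)ε]}(t)`,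
where `k_ε = ⌊T/ε⌋`. -/
def blockAvg (T ε : ℝ) (η : ℝ → Ω → ℝ) (t : ℝ) (ω : Ω) : ℝ :=
  ∑ k ∈ Finset.Ico 1 (Nat.floor (T / ε)),
    (ε⁻¹ * ∫ s in (((k : ℝ) - 1) * ε)..((k : ℝ) * ε), η s ω) *
      Set.indicator (Set.Ioc ((k : ℝ) * ε) (((k : ℝ) + 1) * ε)) (fun _ => (1:ℝ)) t

/-- The moving average `η^ε_t = ε⁻¹ ∫_{(t−ε)⁺}^t η_s ds` of a process `η`. -/
def movAvg (ε : ℝ) (η : ℝ → Ω → ℝ) (t : ℝ) (ω : Ω) : ℝ :=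
  ε⁻¹ * ∫ s in (max (t - ε) 0)..t, η s ω

/-! ### Auxiliary lemmas -/

section Helpers

lemma clip_of_lip {E : Type*} [NormedAddCommGroup E] (φ : E → ℝ) (L : ℝ) (hL : 0 ≤ L)
    (h : ∀ x y, |φ x - φ y| ≤ L * ‖x - y‖) : CLLip φ := by
  refine ⟨L, 0, fun x y => ?_⟩
  have := h x y
  have h0 : (0:ℝ) ≤ ‖x - y‖ := norm_nonneg _
  calc |φ x - φ y| ≤ L * ‖x - y‖ := h x y
    _ ≤ L * (1 + ‖x‖ ^ 0 + ‖y‖ ^ 0) * ‖x - y‖ := by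
        simp only [pow_zero]; nlinarith

lemma sublinearE_congr {𝔓 : Set (Measure Ω)} {ξ ζ : Ω → ℝ} (h : ∀ ω, ξ ω = ζ ω) :
    sublinearE 𝔓 ξ = sublinearE 𝔓 ζ := by
  have : ξ = ζ := funext h
  rw [this]

lemma sublinearE_const {𝔓 : Set (Measure Ω)} (h𝔓 : 𝔓.Nonempty)
    (hprob : ∀ P ∈ 𝔓, IsProbabilityMeasure P) (c : ℝ) :
    sublinearE 𝔓 (fun _ => c) = c := by
  have : Nonempty 𝔓 := h𝔓.to_subtype
  unfold sublinearE
  have h1 : ∀ P : 𝔓, ∫ _, c ∂(P : Measure Ω) = c := fun P => by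
    haveI := hprob P P.2
    simp
  simp_rw [h1]
  exact ciSup_const

lemma sublinearE_add_const {𝔓 : Set (Measure Ω)} (h𝔓 : 𝔓.Nonempty)
    (hprob : ∀ P ∈ 𝔓, IsProbabilityMeasure P) {ξ : Ω → ℝ}
    (hξ : ∀ P ∈ 𝔓, Integrable ξ P)
    (hb : BddAbove (Set.range fun P : 𝔓 => ∫ ω, ξ ω ∂(P : Measure Ω))) (c : ℝ) :
    sublinearE 𝔓 (fun ω => ξ ω + c) = sublinearE 𝔓 ξ + c := by
  have : Nonempty 𝔓 := h𝔓.to_subtype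
  unfold sublinearE
  have h1 : ∀ P : 𝔓, ∫ ω, (ξ ω + c) ∂(P : Measure Ω) = (∫ ω, ξ ω ∂(P : Measure Ω)) + c := by
    intro P
    haveI := hprob P P.2
    rw [integral_add (hξ P P.2) (integrable_const c)]
    simp
  simp_rw [h1]
  exact (ciSup_add hb c).symm

lemma sublinearE_const_add {𝔓 : Set (Measure Ω)} (h𝔓 : 𝔓.Nonempty)
    (hprob : ∀ P ∈ 𝔓, IsProbabilityMeasure P) {ξ : Ω → ℝ}
    (hξ : ∀ P ∈ 𝔓, Integrable ξ P)
    (hb : BddAbove (Set.range fun P : 𝔓 => ∫ ω, ξ ω ∂(P : Measure Ω))) (c : ℝ) :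
    sublinearE 𝔓 (fun ω => c + ξ ω) = c + sublinearE 𝔓 ξ := by
  rw [sublinearE_congr (fun ω => add_comm c (ξ ω)), sublinearE_add_const h𝔓 hprob hξ hb c,
    add_comm]

lemma sublinearE_mono {𝔓 : Set (Measure Ω)} {ξ ζ : Ω → ℝ}
    (hξ : ∀ P ∈ 𝔓, Integrable ξ P) (hζ : ∀ P ∈ 𝔓, Integrable ζ P)
    (hb : BddAbove (Set.range fun P : 𝔓 => ∫ ω, ζ ω ∂(P : Measure Ω)))
    (hle : ∀ ω, ξ ω ≤ ζ ω) : sublinearE 𝔓 ξ ≤ sublinearE 𝔓 ζ :=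
  ciSup_mono hb fun P => integral_mono (hξ P P.2) (hζ P P.2) hle

lemma sublinearE_le {𝔓 : Set (Measure Ω)} (h𝔓 : 𝔓.Nonempty) {ξ : Ω → ℝ} {c : ℝ}
    (hb : ∀ P ∈ 𝔓, ∫ ω, ξ ω ∂P ≤ c) : sublinearE 𝔓 ξ ≤ c := by
  have : Nonempty 𝔓 := h𝔓.to_subtype
  exact ciSup_le fun P => hb P P.2

lemma int_le_of_ofReal_abs_le {P : Measure Ω} [IsProbabilityMeasure P] {ξ : Ω → ℝ}
    (hξ : Integrable ξ P) {D : Ω → ℝ≥0∞} (hpt : ∀ ω, ENNReal.ofReal |ξ ω| ≤ D ω)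
    {κ : ℝ≥0∞} (hDκ : ∫⁻ ω, D ω ∂P ≤ κ) (hκ : κ ≠ ⊤) :
    ∫ ω, ξ ω ∂P ≤ κ.toReal := by
  have h1 : ∫ ω, ξ ω ∂P ≤ ∫ ω, |ξ ω| ∂P :=
    integral_mono hξ hξ.abs fun ω => le_abs_self _
  have h2 : ENNReal.ofReal (∫ ω, |ξ ω| ∂P) ≤ κ := by
    rw [ofReal_integral_eq_lintegral_ofReal hξ.abs (Filter.Eventually.of_forall fun ω => abs_nonneg _)]
    exact le_trans (lintegral_mono hpt) hDκ
  exact h1.trans ((ENNReal.ofReal_le_iff_le_toReal hκ).1 h2)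

/-- Additivity of the sublinear expectation over a sum `g(X) + f(Y)` with `Y` independent
of `X` and `g, f` Lipschitz. -/
lemma indep_sum_eq {𝔓 : Set (Measure Ω)} (h𝔓 : 𝔓.Nonempty)
    (hprob : ∀ P ∈ 𝔓, IsProbabilityMeasure P)
    {M N : ℕ} {X : Ω → Fin M → ℝ} {Y : Ω → Fin N → ℝ}
    (hInd : IndepOf 𝔓 Y X)
    (g : (Fin M → ℝ) → ℝ) (f : (Fin N → ℝ) → ℝ)
    {Lg Lf : ℝ} (hLg : 0 ≤ Lg) (hLf : 0 ≤ Lf)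
    (hg : ∀ x y, |g x - g y| ≤ Lg * ‖x - y‖) (hf : ∀ x y, |f x - f y| ≤ Lf * ‖x - y‖)
    (G F : Ω → ℝ) (hG : ∀ ω, g (X ω) = G ω) (hF : ∀ ω, f (Y ω) = F ω)
    (hGi : ∀ P ∈ 𝔓, Integrable G P) (hFi : ∀ P ∈ 𝔓, Integrable F P)
    (hGb : BddAbove (Set.range fun P : 𝔓 => ∫ ω, G ω ∂(P : Measure Ω)))
    (hFb : BddAbove (Set.range fun P : 𝔓 => ∫ ω, F ω ∂(P : Measure Ω))) :
    sublinearE 𝔓 (fun ω => G ω + F ω) = sublinearE 𝔓 G + sublinearE 𝔓 F := by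
  set φ : (Fin M → ℝ) × (Fin N → ℝ) → ℝ := fun p => g p.1 + f p.2 with hφ
  have hCL : CLLip φ := by
    apply clip_of_lip φ (Lg + Lf) (by linarith)
    intro p q
    have h1 : |g p.1 - g q.1| ≤ Lg * ‖p - q‖ :=
      (hg p.1 q.1).trans (by
        have := norm_fst_le (p - q)
        rw [Prod.fst_sub] at this
        nlinarith [norm_nonneg (p.1 - q.1)])
    have h2 : |f p.2 - f q.2| ≤ Lf * ‖p - q‖ :=
      (hf p.2 q.2).trans (by
        have := norm_snd_le (p - q)
        rw [Prod.snd_sub] at this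
        nlinarith [norm_nonneg (p.2 - q.2)])
    calc |φ p - φ q| = |(g p.1 - g q.1) + (f p.2 - f q.2)| := by simp only [hφ]; ring_nf
      _ ≤ |g p.1 - g q.1| + |f p.2 - f q.2| := abs_add_le _ _
      _ ≤ (Lg + Lf) * ‖p - q‖ := by linarith
  -- the inner sublinear expectation
  have hinner : ∀ x : Fin M → ℝ,
      sublinearE 𝔓 (fun ω' => φ (x, Y ω')) = g x + sublinearE 𝔓 F := by
    intro x
    rw [sublinearE_congr (ζ := fun ω' => g x + F ω') (fun ω' => by simp [hφ, hF ω'])]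
    exact sublinearE_const_add h𝔓 hprob hFi hFb _
  have hI1 : ∀ P ∈ 𝔓, Integrable (fun ω => φ (X ω, Y ω)) P := by
    intro P hP
    have : (fun ω => φ (X ω, Y ω)) = fun ω => G ω + F ω := by
      funext ω; simp [hφ, hG ω, hF ω]
    rw [this]; exact (hGi P hP).add (hFi P hP)
  have hI2 : ∀ x : Fin M → ℝ, ∀ P ∈ 𝔓, Integrable (fun ω => φ (x, Y ω)) P := by
    intro x P hP
    haveI := hprob P hP
    have : (fun ω => φ (x, Y ω)) = fun ω => g x + F ω := by
      funext ω; simp [hφ, hF ω]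
    rw [this]; exact (integrable_const _).add (hFi P hP)
  have hI3 : ∀ P ∈ 𝔓, Integrable (fun ω => sublinearE 𝔓 (fun ω' => φ (X ω, Y ω'))) P := by
    intro P hP
    haveI := hprob P hP
    have : (fun ω => sublinearE 𝔓 (fun ω' => φ (X ω, Y ω'))) =
        fun ω => G ω + sublinearE 𝔓 F := by
      funext ω; rw [hinner (X ω), hG ω]
    rw [this]; exact (hGi P hP).add (integrable_const _)
  have key := hInd φ hCL hI1 hI2 hI3
  have hL : sublinearE 𝔓 (fun ω => φ (X ω, Y ω)) = sublinearE 𝔓 (fun ω => G ω + F ω) :=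
    sublinearE_congr fun ω => by simp [hφ, hG ω, hF ω]
  have hR : sublinearE 𝔓 (fun ω => sublinearE 𝔓 (fun ω' => φ (X ω, Y ω'))) =
      sublinearE 𝔓 G + sublinearE 𝔓 F := by
    rw [sublinearE_congr (ζ := fun ω => G ω + sublinearE 𝔓 F)
      (fun ω => by rw [hinner (X ω), hG ω])]
    exact sublinearE_add_const h𝔓 hprob hGi hGb _
  rw [← hL, key, hR]

end Helpers

section Pad

/-- Extension of a finite vector to `ℕ` by zero. -/
def padf {M : ℕ} (x : Fin M → ℝ) (j : ℕ) : ℝ := if hj : j < M then x ⟨j, hj⟩ else 0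

lemma abs_padf_sub {M : ℕ} (x y : Fin M → ℝ) (j : ℕ) : |padf x j - padf y j| ≤ ‖x - y‖ := by
  unfold padf
  by_cases hj : j < M
  · simp only [dif_pos hj]
    have := norm_le_pi_norm (x - y) ⟨j, hj⟩
    simpa [Real.norm_eq_abs] using this
  · simp [dif_neg hj, norm_nonneg]

lemma lip_sum_pad (M : ℕ) (x y : Fin M → ℝ) :
    |(∑ j ∈ Finset.range M, padf x j) - ∑ j ∈ Finset.range M, padf y j| ≤ (M : ℝ) * ‖x - y‖ := by
  rw [← Finset.sum_sub_distrib]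
  refine (Finset.abs_sum_le_sum_abs _ _).trans ?_
  calc ∑ j ∈ Finset.range M, |padf x j - padf y j| ≤ ∑ _j ∈ Finset.range M, ‖x - y‖ :=
        Finset.sum_le_sum fun j _ => abs_padf_sub x y j
    _ = (M : ℝ) * ‖x - y‖ := by simp [Finset.sum_const, mul_comm]

lemma lip_pairs_pad (m : ℕ) {M : ℕ} (x y : Fin M → ℝ) :
    |(∑ i ∈ Finset.range m, |padf x (2*i+1) - padf x (2*i)|) -
      (∑ i ∈ Finset.range m, |padf y (2*i+1) - padf y (2*i)|)| ≤ (2 * m : ℝ) * ‖x - y‖ := by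
  rw [← Finset.sum_sub_distrib]
  refine (Finset.abs_sum_le_sum_abs _ _).trans ?_
  have key : ∀ i ∈ Finset.range m,
      |(|padf x (2*i+1) - padf x (2*i)|) - (|padf y (2*i+1) - padf y (2*i)|)| ≤ 2 * ‖x - y‖ := by
    intro i _
    have h1 := abs_padf_sub x y (2*i+1)
    have h2 := abs_padf_sub x y (2*i)
    have h3 := abs_abs_sub_abs_le_abs_sub (padf x (2*i+1) - padf x (2*i))
      (padf y (2*i+1) - padf y (2*i))
    have habs : |(padf x (2*i+1) - padf x (2*i)) - (padf y (2*i+1) - padf y (2*i))| ≤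
        |padf x (2*i+1) - padf y (2*i+1)| + |padf x (2*i) - padf y (2*i)| := by
      calc |(padf x (2*i+1) - padf x (2*i)) - (padf y (2*i+1) - padf y (2*i))|
          = |(padf x (2*i+1) - padf y (2*i+1)) - (padf x (2*i) - padf y (2*i))| := by ring_nf
        _ ≤ _ := abs_sub _ _
    linarith
  calc _ ≤ ∑ _i ∈ Finset.range m, 2 * ‖x - y‖ := Finset.sum_le_sum key
    _ = (2 * m : ℝ) * ‖x - y‖ := by simp [Finset.sum_const]; ring

lemma lip_two (y z : Fin 2 → ℝ) : |(y 0 + y 1) - (z 0 + z 1)| ≤ 2 * ‖y - z‖ := by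
  have h0 : |(y - z) 0| ≤ ‖y - z‖ := by
    simpa [Real.norm_eq_abs] using norm_le_pi_norm (y - z) 0
  have h1 : |(y - z) 1| ≤ ‖y - z‖ := by
    simpa [Real.norm_eq_abs] using norm_le_pi_norm (y - z) 1
  have he : (y 0 + y 1) - (z 0 + z 1) = (y - z) 0 + (y - z) 1 := by
    simp [Pi.sub_apply]; ring
  rw [he]
  calc |(y - z) 0 + (y - z) 1| ≤ |(y - z) 0| + |(y - z) 1| := abs_add_le _ _
    _ ≤ 2 * ‖y - z‖ := by linarith

lemma lip_absdiff (y z : Fin 2 → ℝ) : |(|y 1 - y 0|) - (|z 1 - z 0|)| ≤ 2 * ‖y - z‖ := by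
  have h0 : |(y - z) 0| ≤ ‖y - z‖ := by
    simpa [Real.norm_eq_abs] using norm_le_pi_norm (y - z) 0
  have h1 : |(y - z) 1| ≤ ‖y - z‖ := by
    simpa [Real.norm_eq_abs] using norm_le_pi_norm (y - z) 1
  have h3 := abs_abs_sub_abs_le_abs_sub (y 1 - y 0) (z 1 - z 0)
  have habs : |(y 1 - y 0) - (z 1 - z 0)| ≤ |(y - z) 1| + |(y - z) 0| := by
    calc |(y 1 - y 0) - (z 1 - z 0)| = |(y - z) 1 - (y - z) 0| := by
          simp [Pi.sub_apply]; ring_nf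
      _ ≤ _ := abs_sub _ _
  linarith

lemma lip_one (y z : Fin 1 → ℝ) : |y 0 - z 0| ≤ 1 * ‖y - z‖ := by
  have h0 : |(y - z) 0| ≤ ‖y - z‖ := by
    simpa [Real.norm_eq_abs] using norm_le_pi_norm (y - z) 0
  simpa [Pi.sub_apply] using h0

end Pad

/-- if `A_t = ∫₀ᵗ h_s ds` with `h ∈ M¹(𝔓)` has independent increments, then
for every `n ≥ 1`, `2‖h − h^{T/(2n),0}‖_{M¹} ≥ Ê(A_T) + Ê(−A_T)`. -/
theorem stmt3 (𝔓 : Set (Measure Ω)) (h𝔓 : 𝔓.Nonempty)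
    (hprob : ∀ P ∈ 𝔓, IsProbabilityMeasure P)
    (T : ℝ) (hT : 0 < T)
    (h : ℝ → Ω → ℝ) (hh : MemM1 𝔓 T h)
    (A : ℝ → Ω → ℝ) (hA : ∀ t ω, A t ω = ∫ s in (0:ℝ)..t, h s ω)
    (hAint : ∀ t ∈ Set.Icc (0:ℝ) T, ∀ P ∈ 𝔓, Integrable (A t) P)
    (hind : HasIndepIncrements 𝔓 T A) :
    ∀ n : ℕ, 1 ≤ n →
      ENNReal.ofReal (sublinearE 𝔓 (A T) + sublinearE 𝔓 (fun ω => -A T ω)) ≤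
        2 * M1norm 𝔓 T (fun t ω => h t ω - blockAvg T (T / (2 * n)) h t ω) := by
  intro n hn
  have hn0 : (0:ℝ) < 2 * n := by
    have : (1:ℝ) ≤ n := by exact_mod_cast hn
    linarith
  set ε : ℝ := T / (2 * n) with hε
  have hε0 : 0 < ε := div_pos hT hn0
  have hTε : (2 * (n:ℝ)) * ε = T := by
    rw [hε]; field_simp
  -- grid points and increments
  set tk : ℕ → ℝ := fun k => (k : ℝ) * ε with htkdef
  have htk0 : tk 0 = 0 := by simp [htkdef]
  have htkT : tk (2*n) = T := by
    simp only [htkdef]; push_cast; linarith [hTε]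
  have htk_mono : Monotone tk := by
    intro k l hkl
    simp only [htkdef]
    exact mul_le_mul_of_nonneg_right (by exact_mod_cast hkl) hε0.le
  have htk_mem : ∀ k, k ≤ 2*n → tk k ∈ Set.Icc (0:ℝ) T := by
    intro k hk
    constructor
    · rw [← htk0]; exact htk_mono (Nat.zero_le k)
    · rw [← htkT]; exact htk_mono hk
  set Dk : ℕ → Ω → ℝ := fun k ω => A (tk (k+1)) ω - A (tk k) ω with hDkdef
  set Gm : ℕ → Ω → ℝ := fun m ω => ∑ i ∈ Finset.range m, |Dk (2*i+1) ω - Dk (2*i) ω| with hGmdef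
  set Dh : Ω → ℝ≥0∞ := fun ω => ∫⁻ t in Set.Ioc (0:ℝ) T, ENNReal.ofReal |h t ω| with hDhdef
  have hM1 : M1norm 𝔓 T h < ⊤ := hh.2.1
  have hM1eq : M1norm 𝔓 T h = ⨆ P : 𝔓, ∫⁻ ω, Dh ω ∂(P : Measure Ω) := by
    rw [hDhdef]; rfl
  have hDhle : ∀ P ∈ 𝔓, ∫⁻ ω, Dh ω ∂(P : Measure Ω) ≤ M1norm 𝔓 T h := by
    intro P hP
    rw [hM1eq]
    exact le_iSup (fun Q : 𝔓 => ∫⁻ ω, Dh ω ∂(Q : Measure Ω)) ⟨P, hP⟩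
  -- master integral bound
  have master : ∀ (ξ : Ω → ℝ) (K : ℝ≥0∞), K ≠ ⊤ → (∀ P ∈ 𝔓, Integrable ξ P) →
      (∀ ω, ENNReal.ofReal |ξ ω| ≤ K * Dh ω) →
      ∀ P ∈ 𝔓, ∫ ω, ξ ω ∂(P : Measure Ω) ≤ (K * M1norm 𝔓 T h).toReal := by
    intro ξ K hK hint hpt P hP
    haveI := hprob P hP
    refine int_le_of_ofReal_abs_le (hint P hP) hpt ?_ (ENNReal.mul_ne_top hK hM1.ne)
    rw [lintegral_const_mul' K _ hK]
    exact mul_le_mul_right (hDhle P hP) K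
  have bdd : ∀ (ξ : Ω → ℝ) (K : ℝ≥0∞), K ≠ ⊤ → (∀ P ∈ 𝔓, Integrable ξ P) →
      (∀ ω, ENNReal.ofReal |ξ ω| ≤ K * Dh ω) →
      BddAbove (Set.range fun P : 𝔓 => ∫ ω, ξ ω ∂(P : Measure Ω)) := by
    intro ξ K hK hint hpt
    refine ⟨(K * M1norm 𝔓 T h).toReal, ?_⟩
    rintro x ⟨P, rfl⟩
    exact master ξ K hK hint hpt P P.2
  -- measurability and integrability of sections of h
  have hhmeas : ∀ ω, Measurable fun t => h t ω := by
    intro ω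
    exact hh.1.comp (measurable_id.prodMk measurable_const)
  have hIntOn : ∀ ω, Dh ω ≠ ⊤ → IntegrableOn (fun t => h t ω) (Set.Ioc 0 T) := by
    intro ω hω
    refine ⟨(hhmeas ω).aestronglyMeasurable, ?_⟩
    rw [hasFiniteIntegral_iff_norm]
    simp only [Real.norm_eq_abs]
    rw [hDhdef] at hω
    exact lt_top_iff_ne_top.2 hω
  -- |A t| is dominated by Dh
  have hA0 : ∀ ω, A 0 ω = 0 := by
    intro ω; rw [hA 0 ω, intervalIntegral.integral_same]
  have habsA : ∀ t, t ∈ Set.Icc (0:ℝ) T → ∀ ω, ENNReal.ofReal |A t ω| ≤ Dh ω := by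
    intro t ht ω
    by_cases hω : Dh ω = ⊤
    · rw [hω]; exact le_top
    have hint : IntegrableOn (fun u => h u ω) (Set.Ioc 0 T) := hIntOn ω hω
    have hii : IntervalIntegrable (fun u => h u ω) volume 0 t := by
      rw [intervalIntegrable_iff_integrableOn_Ioc_of_le ht.1]
      exact hint.mono_set (Set.Ioc_subset_Ioc_right ht.2)
    have h1 : |A t ω| ≤ ∫ u in Set.Ioc 0 t, |h u ω| := by
      rw [hA t ω, ← intervalIntegral.integral_of_le ht.1 (f := fun u => |h u ω|)]
      exact intervalIntegral.abs_integral_le_integral_abs ht.1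
    have h2 : ENNReal.ofReal (∫ u in Set.Ioc 0 t, |h u ω|) =
        ∫⁻ u in Set.Ioc 0 t, ENNReal.ofReal |h u ω| := by
      refine ofReal_integral_eq_lintegral_ofReal ?_ ?_
      · exact (hint.mono_set (Set.Ioc_subset_Ioc_right ht.2)).abs
      · exact Filter.Eventually.of_forall fun u => abs_nonneg _
    calc ENNReal.ofReal |A t ω| ≤ ENNReal.ofReal (∫ u in Set.Ioc 0 t, |h u ω|) :=
          ENNReal.ofReal_le_ofReal h1
      _ = ∫⁻ u in Set.Ioc 0 t, ENNReal.ofReal |h u ω| := h2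
      _ ≤ Dh ω := by
          rw [hDhdef]
          exact lintegral_mono_set (Set.Ioc_subset_Ioc_right ht.2)
  -- integrability of increments
  have hAi : ∀ k, k ≤ 2*n → ∀ P ∈ 𝔓, Integrable (A (tk k)) P :=
    fun k hk => hAint (tk k) (htk_mem k hk)
  have hDki : ∀ k, k + 1 ≤ 2*n → ∀ P ∈ 𝔓, Integrable (Dk k) P := by
    intro k hk P hP
    have := (hAi (k+1) hk P hP).sub (hAi k (by omega) P hP)
    exact this
  have hDkabs : ∀ k, k + 1 ≤ 2*n → ∀ ω, ENNReal.ofReal |Dk k ω| ≤ 2 * Dh ω := by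
    intro k hk ω
    have h1 : |Dk k ω| ≤ |A (tk (k+1)) ω| + |A (tk k) ω| := by
      rw [hDkdef]; exact abs_sub _ _
    calc ENNReal.ofReal |Dk k ω| ≤ ENNReal.ofReal (|A (tk (k+1)) ω| + |A (tk k) ω|) :=
          ENNReal.ofReal_le_ofReal h1
      _ = ENNReal.ofReal |A (tk (k+1)) ω| + ENNReal.ofReal |A (tk k) ω| :=
          ENNReal.ofReal_add (abs_nonneg _) (abs_nonneg _)
      _ ≤ Dh ω + Dh ω :=
          add_le_add (habsA _ (htk_mem _ hk) ω) (habsA _ (htk_mem _ (by omega)) ω)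
      _ = 2 * Dh ω := (two_mul _).symm
  have habs4 : ∀ (a b : ℕ) (w : Ω → ℝ), a + 1 ≤ 2*n → b + 1 ≤ 2*n →
      (∀ ω, |w ω| ≤ |Dk a ω| + |Dk b ω|) → ∀ ω, ENNReal.ofReal |w ω| ≤ 4 * Dh ω := by
    intro a b w ha hb hw ω
    calc ENNReal.ofReal |w ω| ≤ ENNReal.ofReal (|Dk a ω| + |Dk b ω|) :=
          ENNReal.ofReal_le_ofReal (hw ω)
      _ = ENNReal.ofReal |Dk a ω| + ENNReal.ofReal |Dk b ω| :=
          ENNReal.ofReal_add (abs_nonneg _) (abs_nonneg _)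
      _ ≤ 2 * Dh ω + 2 * Dh ω := add_le_add (hDkabs a ha ω) (hDkabs b hb ω)
      _ = 4 * Dh ω := by ring
  have hGmnonneg : ∀ m ω, 0 ≤ Gm m ω := by
    intro m ω
    rw [hGmdef]
    exact Finset.sum_nonneg fun i _ => abs_nonneg _
  have hGmi : ∀ m, m ≤ n → ∀ P ∈ 𝔓, Integrable (Gm m) P := by
    intro m hm P hP
    rw [hGmdef]
    apply integrable_finset_sum
    intro i hi
    rw [Finset.mem_range] at hi
    exact ((hDki (2*i+1) (by omega) P hP).sub (hDki (2*i) (by omega) P hP)).abs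
  have hGmabs : ∀ m, m ≤ n → ∀ ω, ENNReal.ofReal |Gm m ω| ≤ ((4*n : ℕ) : ℝ≥0∞) * Dh ω := by
    intro m hm ω
    rw [abs_of_nonneg (hGmnonneg m ω), hGmdef]
    calc ENNReal.ofReal (∑ i ∈ Finset.range m, |Dk (2*i+1) ω - Dk (2*i) ω|)
        = ∑ i ∈ Finset.range m, ENNReal.ofReal |Dk (2*i+1) ω - Dk (2*i) ω| :=
          ENNReal.ofReal_sum_of_nonneg fun i _ => abs_nonneg _
      _ ≤ ∑ _i ∈ Finset.range m, 4 * Dh ω := by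
          refine Finset.sum_le_sum fun i hi => ?_
          rw [Finset.mem_range] at hi
          refine habs4 (2*i+1) (2*i) (fun ω => Dk (2*i+1) ω - Dk (2*i) ω)
            (by omega) (by omega) (fun ω => abs_sub _ _) ω
      _ = (m : ℝ≥0∞) * (4 * Dh ω) := by
          rw [Finset.sum_const, nsmul_eq_mul, Finset.card_range]
      _ ≤ (n : ℝ≥0∞) * (4 * Dh ω) := by
          exact mul_le_mul_left (by exact_mod_cast hm) _
      _ = ((4*n : ℕ) : ℝ≥0∞) * Dh ω := by push_cast; ring
  -- the key induction
  have main : ∀ m : ℕ, m ≤ n →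
      sublinearE 𝔓 (A (tk (2*m))) + sublinearE 𝔓 (fun ω => -A (tk (2*m)) ω) ≤
        2 * sublinearE 𝔓 (Gm m) := by
    intro m
    induction m with
    | zero =>
      intro _
      have hz1 : sublinearE 𝔓 (A (tk (2*0))) = 0 := by
        rw [sublinearE_congr (ζ := fun _ => (0:ℝ)) (fun ω => by
          simp only [Nat.mul_zero]
          rw [htk0]; exact hA0 ω)]
        exact sublinearE_const h𝔓 hprob 0
      have hz2 : sublinearE 𝔓 (fun ω => -A (tk (2*0)) ω) = 0 := by
        rw [sublinearE_congr (ζ := fun _ => (0:ℝ)) (fun ω => by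
          simp only [Nat.mul_zero]
          rw [htk0, hA0 ω, neg_zero])]
        exact sublinearE_const h𝔓 hprob 0
      have hz3 : sublinearE 𝔓 (Gm 0) = 0 := by
        rw [sublinearE_congr (ζ := fun _ => (0:ℝ)) (fun ω => by
          rw [hGmdef]; simp)]
        exact sublinearE_const h𝔓 hprob 0
      rw [hz1, hz2, hz3]; norm_num
    | succ m ih =>
      intro hm1
      have hm : m ≤ n := Nat.le_of_succ_le hm1
      have hm2 : 2*m + 2 ≤ 2*n := by omega
      set a : Ω → ℝ := Dk (2*m) with hadef
      set b : Ω → ℝ := Dk (2*m+1) with hbdef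
      -- the big independence: the pair (a,b) is independent of the first 2m increments
      have hbig := hind (2*m) 2 (fun i => tk (i : ℕ)) (fun i => tk (2*m + (i : ℕ)))
        (fun i j hij => htk_mono (Fin.le_def.mp hij))
        (fun i j hij => htk_mono (Nat.add_le_add_left (Fin.le_def.mp hij) _))
        (by
          show (0:ℝ) ≤ tk ((0 : Fin (2*m+1)) : ℕ)
          rw [← htk0]
          exact htk_mono (Nat.zero_le _))
        (by
          show tk ((Fin.last (2*m) : Fin (2*m+1)) : ℕ) ≤ tk (2*m + ((0 : Fin 3) : ℕ))
          exact htk_mono (by simp [Fin.val_last]))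
        (by
          show tk (2*m + ((Fin.last 2 : Fin 3) : ℕ)) ≤ T
          rw [← htkT]
          exact htk_mono (by simp [Fin.val_last]; omega))
      -- the small independence: b is independent of a
      have hsmall := hind 1 1 (fun i : Fin 2 => tk (2*m + (i : ℕ)))
        (fun i : Fin 2 => tk (2*m+1 + (i : ℕ)))
        (fun i j hij => htk_mono (Nat.add_le_add_left (Fin.le_def.mp hij) _))
        (fun i j hij => htk_mono (Nat.add_le_add_left (Fin.le_def.mp hij) _))
        (by
          show (0:ℝ) ≤ tk (2*m + ((0 : Fin 2) : ℕ))
          rw [← htk0]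
          exact htk_mono (Nat.zero_le _))
        (by
          show tk (2*m + ((Fin.last 1 : Fin 2) : ℕ)) ≤ tk (2*m+1 + ((0 : Fin 2) : ℕ))
          exact htk_mono (by simp [Fin.val_last]))
        (by
          show tk (2*m+1 + ((Fin.last 1 : Fin 2) : ℕ)) ≤ T
          rw [← htkT]
          exact htk_mono (by simp [Fin.val_last]; omega))
      -- value computations
      have hXsum : ∀ ω, (∑ j ∈ Finset.range (2*m),
          padf (fun i : Fin (2*m) => A (tk ((i.succ : Fin (2*m+1)) : ℕ)) ω -
            A (tk ((i.castSucc : Fin (2*m+1)) : ℕ)) ω) j) = A (tk (2*m)) ω := by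
        intro ω
        have hpad : ∀ j ∈ Finset.range (2*m),
            padf (fun i : Fin (2*m) => A (tk ((i.succ : Fin (2*m+1)) : ℕ)) ω -
              A (tk ((i.castSucc : Fin (2*m+1)) : ℕ)) ω) j = A (tk (j+1)) ω - A (tk j) ω := by
          intro j hj
          rw [Finset.mem_range] at hj
          rw [padf, dif_pos hj]
          simp [Fin.val_succ, Fin.coe_castSucc]
        rw [Finset.sum_congr rfl hpad, Finset.sum_range_sub (fun k => A (tk k) ω), htk0, hA0 ω,
          sub_zero]
      have hXpairs : ∀ ω, (∑ i ∈ Finset.range m,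
          |padf (fun i : Fin (2*m) => A (tk ((i.succ : Fin (2*m+1)) : ℕ)) ω -
            A (tk ((i.castSucc : Fin (2*m+1)) : ℕ)) ω) (2*i+1) -
          padf (fun i : Fin (2*m) => A (tk ((i.succ : Fin (2*m+1)) : ℕ)) ω -
            A (tk ((i.castSucc : Fin (2*m+1)) : ℕ)) ω) (2*i)|) = Gm m ω := by
        intro ω
        rw [hGmdef]
        refine Finset.sum_congr rfl fun i hi => ?_
        rw [Finset.mem_range] at hi
        have h1 : 2*i+1 < 2*m := by omega
        have h2 : 2*i < 2*m := by omega
        rw [padf, dif_pos h1, padf, dif_pos h2, hDkdef]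
        simp [Fin.val_succ, Fin.coe_castSucc]
      have hY0 : ∀ ω, A (tk (2*m + (((0 : Fin 2).succ : Fin 3) : ℕ))) ω -
          A (tk (2*m + (((0 : Fin 2).castSucc : Fin 3) : ℕ))) ω = a ω := by
        intro ω
        rw [hadef, hDkdef]
        norm_num
      have hY1 : ∀ ω, A (tk (2*m + (((1 : Fin 2).succ : Fin 3) : ℕ))) ω -
          A (tk (2*m + (((1 : Fin 2).castSucc : Fin 3) : ℕ))) ω = b ω := by
        intro ω
        rw [hbdef, hDkdef]
        norm_num
      have hsx : ∀ ω, A (tk (2*m + (((0 : Fin 1).succ : Fin 2) : ℕ))) ω -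
          A (tk (2*m + (((0 : Fin 1).castSucc : Fin 2) : ℕ))) ω = a ω := by
        intro ω
        rw [hadef, hDkdef]
        norm_num
      have hsy : ∀ ω, A (tk (2*m+1 + (((0 : Fin 1).succ : Fin 2) : ℕ))) ω -
          A (tk (2*m+1 + (((0 : Fin 1).castSucc : Fin 2) : ℕ))) ω = b ω := by
        intro ω
        rw [hbdef, hDkdef]
        norm_num
      have hFadd : ∀ ω,
          (A (tk (2*m + (((0 : Fin 2).succ : Fin 3) : ℕ))) ω -
            A (tk (2*m + (((0 : Fin 2).castSucc : Fin 3) : ℕ))) ω) +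
          (A (tk (2*m + (((1 : Fin 2).succ : Fin 3) : ℕ))) ω -
            A (tk (2*m + (((1 : Fin 2).castSucc : Fin 3) : ℕ))) ω) = a ω + b ω :=
        fun ω => by rw [hY0 ω, hY1 ω]
      have hFnadd : ∀ ω,
          -((A (tk (2*m + (((0 : Fin 2).succ : Fin 3) : ℕ))) ω -
            A (tk (2*m + (((0 : Fin 2).castSucc : Fin 3) : ℕ))) ω) +
          (A (tk (2*m + (((1 : Fin 2).succ : Fin 3) : ℕ))) ω -
            A (tk (2*m + (((1 : Fin 2).castSucc : Fin 3) : ℕ))) ω)) = -(a ω + b ω) :=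
        fun ω => by rw [hY0 ω, hY1 ω]
      have hFabsd : ∀ ω,
          |(A (tk (2*m + (((1 : Fin 2).succ : Fin 3) : ℕ))) ω -
            A (tk (2*m + (((1 : Fin 2).castSucc : Fin 3) : ℕ))) ω) -
          (A (tk (2*m + (((0 : Fin 2).succ : Fin 3) : ℕ))) ω -
            A (tk (2*m + (((0 : Fin 2).castSucc : Fin 3) : ℕ))) ω)| = |b ω - a ω| :=
        fun ω => by rw [hY0 ω, hY1 ω]
      have hXsumn : ∀ ω, -(∑ j ∈ Finset.range (2*m),
          padf (fun i : Fin (2*m) => A (tk ((i.succ : Fin (2*m+1)) : ℕ)) ω -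
            A (tk ((i.castSucc : Fin (2*m+1)) : ℕ)) ω) j) = -A (tk (2*m)) ω :=
        fun ω => by rw [hXsum ω]
      have hsxn : ∀ ω, -(A (tk (2*m + (((0 : Fin 1).succ : Fin 2) : ℕ))) ω -
          A (tk (2*m + (((0 : Fin 1).castSucc : Fin 2) : ℕ))) ω) = -a ω :=
        fun ω => by rw [hsx ω]
      have hsyn : ∀ ω, -(A (tk (2*m+1 + (((0 : Fin 1).succ : Fin 2) : ℕ))) ω -
          A (tk (2*m+1 + (((0 : Fin 1).castSucc : Fin 2) : ℕ))) ω) = -b ω :=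
        fun ω => by rw [hsy ω]
      -- integrability
      have hai : ∀ P ∈ 𝔓, Integrable a P := hDki (2*m) (by omega)
      have hbi : ∀ P ∈ 𝔓, Integrable b P := hDki (2*m+1) (by omega)
      have hnai : ∀ P ∈ 𝔓, Integrable (fun ω => -a ω) P := fun P hP => (hai P hP).neg
      have hnbi : ∀ P ∈ 𝔓, Integrable (fun ω => -b ω) P := fun P hP => (hbi P hP).neg
      have hAmi : ∀ P ∈ 𝔓, Integrable (A (tk (2*m))) P := hAi (2*m) (by omega)
      have hAmni : ∀ P ∈ 𝔓, Integrable (fun ω => -A (tk (2*m)) ω) P :=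
        fun P hP => (hAmi P hP).neg
      have hGmi' : ∀ P ∈ 𝔓, Integrable (Gm m) P := hGmi m hm
      have habi : ∀ P ∈ 𝔓, Integrable (fun ω => a ω + b ω) P :=
        fun P hP => (hai P hP).add (hbi P hP)
      have hnabi : ∀ P ∈ 𝔓, Integrable (fun ω => -(a ω + b ω)) P :=
        fun P hP => (habi P hP).neg
      have hsubi : ∀ P ∈ 𝔓, Integrable (fun ω => a ω - b ω) P :=
        fun P hP => (hai P hP).sub (hbi P hP)
      have hsubi' : ∀ P ∈ 𝔓, Integrable (fun ω => b ω - a ω) P :=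
        fun P hP => (hbi P hP).sub (hai P hP)
      have habsdi : ∀ P ∈ 𝔓, Integrable (fun ω => |b ω - a ω|) P :=
        fun P hP => ((hbi P hP).sub (hai P hP)).abs
      -- boundedness
      have hDa : ∀ ω, ENNReal.ofReal |a ω| ≤ 2 * Dh ω := by
        intro ω; rw [hadef]; exact hDkabs (2*m) (by omega) ω
      have hDb : ∀ ω, ENNReal.ofReal |b ω| ≤ 2 * Dh ω := by
        intro ω; rw [hbdef]; exact hDkabs (2*m+1) (by omega) ω
      have habs4' : ∀ (w : Ω → ℝ), (∀ ω, |w ω| ≤ |a ω| + |b ω|) →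
          ∀ ω, ENNReal.ofReal |w ω| ≤ 4 * Dh ω := by
        intro w hw ω
        calc ENNReal.ofReal |w ω| ≤ ENNReal.ofReal (|a ω| + |b ω|) :=
              ENNReal.ofReal_le_ofReal (hw ω)
          _ = ENNReal.ofReal |a ω| + ENNReal.ofReal |b ω| :=
              ENNReal.ofReal_add (abs_nonneg _) (abs_nonneg _)
          _ ≤ 2 * Dh ω + 2 * Dh ω := add_le_add (hDa ω) (hDb ω)
          _ = 4 * Dh ω := by ring
      have bddA : BddAbove (Set.range fun P : 𝔓 => ∫ ω, A (tk (2*m)) ω ∂(P : Measure Ω)) :=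
        bdd _ 1 ENNReal.one_ne_top hAmi
          (fun ω => by rw [one_mul]; exact habsA _ (htk_mem _ (by omega)) ω)
      have bddAn : BddAbove (Set.range fun P : 𝔓 => ∫ ω, -A (tk (2*m)) ω ∂(P : Measure Ω)) :=
        bdd _ 1 ENNReal.one_ne_top hAmni
          (fun ω => by rw [one_mul, abs_neg]; exact habsA _ (htk_mem _ (by omega)) ω)
      have bdda : BddAbove (Set.range fun P : 𝔓 => ∫ ω, a ω ∂(P : Measure Ω)) :=
        bdd _ 2 ENNReal.ofNat_ne_top hai hDa
      have bddb : BddAbove (Set.range fun P : 𝔓 => ∫ ω, b ω ∂(P : Measure Ω)) :=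
        bdd _ 2 ENNReal.ofNat_ne_top hbi hDb
      have bddna : BddAbove (Set.range fun P : 𝔓 => ∫ ω, -a ω ∂(P : Measure Ω)) :=
        bdd _ 2 ENNReal.ofNat_ne_top hnai (fun ω => by rw [abs_neg]; exact hDa ω)
      have bddnb : BddAbove (Set.range fun P : 𝔓 => ∫ ω, -b ω ∂(P : Measure Ω)) :=
        bdd _ 2 ENNReal.ofNat_ne_top hnbi (fun ω => by rw [abs_neg]; exact hDb ω)
      have bddab : BddAbove (Set.range fun P : 𝔓 => ∫ ω, (a ω + b ω) ∂(P : Measure Ω)) :=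
        bdd _ 4 (by norm_num) habi (habs4' _ (fun ω => abs_add_le _ _))
      have bddnab : BddAbove (Set.range fun P : 𝔓 => ∫ ω, (-(a ω + b ω)) ∂(P : Measure Ω)) :=
        bdd _ 4 (by norm_num) hnabi (habs4' _ (fun ω => by rw [abs_neg]; exact abs_add_le _ _))
      have bddsub : BddAbove (Set.range fun P : 𝔓 => ∫ ω, (a ω - b ω) ∂(P : Measure Ω)) :=
        bdd _ 4 (by norm_num) hsubi (habs4' _ (fun ω => abs_sub _ _))
      have bddsub' : BddAbove (Set.range fun P : 𝔓 => ∫ ω, (b ω - a ω) ∂(P : Measure Ω)) :=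
        bdd _ 4 (by norm_num) hsubi'
          (habs4' _ (fun ω => by rw [abs_sub_comm]; exact abs_sub _ _))
      have bddabsd : BddAbove (Set.range fun P : 𝔓 => ∫ ω, |b ω - a ω| ∂(P : Measure Ω)) :=
        bdd _ 4 (by norm_num) habsdi
          (habs4' _ (fun ω => by rw [abs_abs, abs_sub_comm]; exact abs_sub _ _))
      have bddG : BddAbove (Set.range fun P : 𝔓 => ∫ ω, Gm m ω ∂(P : Measure Ω)) :=
        bdd _ ((4*n : ℕ) : ℝ≥0∞) (ENNReal.natCast_ne_top _) hGmi' (hGmabs m hm)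
      -- Lipschitz variants
      have lip_sum_neg : ∀ x y : Fin (2*m) → ℝ,
          |(-(∑ j ∈ Finset.range (2*m), padf x j)) - (-(∑ j ∈ Finset.range (2*m), padf y j))| ≤
            ((2*m : ℕ) : ℝ) * ‖x - y‖ := by
        intro x y
        rw [neg_sub_neg]
        have := lip_sum_pad (2*m) y x
        rwa [norm_sub_rev] at this
      have lip_two_neg : ∀ y z : Fin 2 → ℝ,
          |(-(y 0 + y 1)) - (-(z 0 + z 1))| ≤ 2 * ‖y - z‖ := by
        intro y z
        rw [neg_sub_neg]
        have := lip_two z y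
        rwa [norm_sub_rev] at this
      have lip_one_neg : ∀ y z : Fin 1 → ℝ, |(-y 0) - (-z 0)| ≤ 1 * ‖y - z‖ := by
        intro y z
        rw [neg_sub_neg]
        have := lip_one z y
        rwa [norm_sub_rev] at this
      -- telescoping identity
      have hAstep : ∀ ω, A (tk (2*(m+1))) ω = A (tk (2*m)) ω + (a ω + b ω) := by
        intro ω
        have h22 : 2*(m+1) = (2*m+1)+1 := by ring
        rw [h22, hadef, hbdef, hDkdef]
        ring
      -- the seven independence identities
      have e1 : sublinearE 𝔓 (A (tk (2*(m+1)))) =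
          sublinearE 𝔓 (A (tk (2*m))) + sublinearE 𝔓 (fun ω => a ω + b ω) := by
        rw [← indep_sum_eq h𝔓 hprob hbig
          (fun x => ∑ j ∈ Finset.range (2*m), padf x j) (fun y => y 0 + y 1)
          (Nat.cast_nonneg _) (by norm_num)
          (lip_sum_pad (2*m)) lip_two
          (A (tk (2*m))) (fun ω => a ω + b ω)
          hXsum hFadd
          hAmi habi bddA bddab]
        exact sublinearE_congr fun ω => hAstep ω
      have e2 : sublinearE 𝔓 (fun ω => -A (tk (2*(m+1))) ω) =
          sublinearE 𝔓 (fun ω => -A (tk (2*m)) ω) + sublinearE 𝔓 (fun ω => -(a ω + b ω)) := by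
        rw [← indep_sum_eq h𝔓 hprob hbig
          (fun x => -(∑ j ∈ Finset.range (2*m), padf x j)) (fun y => -(y 0 + y 1))
          (Nat.cast_nonneg _) (by norm_num)
          lip_sum_neg lip_two_neg
          (fun ω => -A (tk (2*m)) ω) (fun ω => -(a ω + b ω))
          hXsumn hFnadd
          hAmni hnabi bddAn bddnab]
        refine sublinearE_congr fun ω => ?_
        rw [hAstep ω]; ring
      have e3 : sublinearE 𝔓 (Gm (m+1)) =
          sublinearE 𝔓 (Gm m) + sublinearE 𝔓 (fun ω => |b ω - a ω|) := by
        rw [← indep_sum_eq h𝔓 hprob hbig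
          (fun x => ∑ i ∈ Finset.range m, |padf x (2*i+1) - padf x (2*i)|)
          (fun y => |y 1 - y 0|)
          (by positivity) (by norm_num)
          (fun x y => lip_pairs_pad m x y) lip_absdiff
          (Gm m) (fun ω => |b ω - a ω|)
          hXpairs hFabsd
          hGmi' habsdi bddG bddabsd]
        refine sublinearE_congr fun ω => ?_
        have hsucc : Gm (m+1) ω = Gm m ω + |Dk (2*m+1) ω - Dk (2*m) ω| := by
          simp only [hGmdef]
          rw [Finset.sum_range_succ]
        rw [hsucc, hadef, hbdef]
      have e4 : sublinearE 𝔓 (fun ω => a ω + b ω) =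
          sublinearE 𝔓 a + sublinearE 𝔓 b :=
        indep_sum_eq h𝔓 hprob hsmall (fun x => x 0) (fun y => y 0)
          zero_le_one zero_le_one lip_one lip_one a b hsx hsy hai hbi bdda bddb
      have e5 : sublinearE 𝔓 (fun ω => -(a ω + b ω)) =
          sublinearE 𝔓 (fun ω => -a ω) + sublinearE 𝔓 (fun ω => -b ω) := by
        rw [← indep_sum_eq h𝔓 hprob hsmall (fun x => -x 0) (fun y => -y 0)
          zero_le_one zero_le_one lip_one_neg lip_one_neg
          (fun ω => -a ω) (fun ω => -b ω)
          hsxn hsyn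
          hnai hnbi bddna bddnb]
        exact sublinearE_congr fun ω => by ring
      have e6 : sublinearE 𝔓 (fun ω => a ω - b ω) =
          sublinearE 𝔓 a + sublinearE 𝔓 (fun ω => -b ω) := by
        rw [← indep_sum_eq h𝔓 hprob hsmall (fun x => x 0) (fun y => -y 0)
          zero_le_one zero_le_one lip_one lip_one_neg
          a (fun ω => -b ω) hsx hsyn
          hai hnbi bdda bddnb]
        exact sublinearE_congr fun ω => by ring
      have e7 : sublinearE 𝔓 (fun ω => b ω - a ω) =
          sublinearE 𝔓 (fun ω => -a ω) + sublinearE 𝔓 b := by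
        rw [← indep_sum_eq h𝔓 hprob hsmall (fun x => -x 0) (fun y => y 0)
          zero_le_one zero_le_one lip_one_neg lip_one
          (fun ω => -a ω) b hsxn hsy
          hnai hbi bddna bddb]
        exact sublinearE_congr fun ω => by ring
      have m1 : sublinearE 𝔓 (fun ω => a ω - b ω) ≤
          sublinearE 𝔓 (fun ω => |b ω - a ω|) :=
        sublinearE_mono hsubi habsdi bddabsd
          (fun ω => by rw [abs_sub_comm]; exact le_abs_self _)
      have m2 : sublinearE 𝔓 (fun ω => b ω - a ω) ≤
          sublinearE 𝔓 (fun ω => |b ω - a ω|) :=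
        sublinearE_mono hsubi' habsdi bddabsd (fun ω => le_abs_self _)
      have ih' := ih hm
      rw [e1, e2, e3, e4, e5]
      linarith

  -- block-average facts
  have htkk : ∀ k : ℕ, tk k = (k : ℝ) * ε := fun k => by rw [htkdef]
  have hfloor : Nat.floor (T / ε) = 2 * n := by
    have hq : T / ε = ((2*n : ℕ) : ℝ) := by
      rw [hε]; push_cast; field_simp
    rw [hq, Nat.floor_natCast]
  have hBdef : ∀ (t : ℝ) (ω' : Ω), blockAvg T ε h t ω' =
      ∑ k ∈ Finset.Ico 1 (2*n), (ε⁻¹ * ∫ s in (((k:ℝ) - 1) * ε)..((k:ℝ) * ε), h s ω') *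
        Set.indicator (Set.Ioc ((k:ℝ) * ε) (((k:ℝ) + 1) * ε)) (fun _ => (1:ℝ)) t := by
    intro t ω'
    rw [blockAvg, hfloor]
  have hBeval : ∀ k : ℕ, 1 ≤ k → k < 2*n → ∀ t ∈ Set.Ioc (tk k) (tk (k+1)), ∀ ω' : Ω,
      blockAvg T ε h t ω' = ε⁻¹ * ∫ s in (((k:ℝ) - 1) * ε)..((k:ℝ) * ε), h s ω' := by
    intro k hk1 hk2 t ht ω'
    have htkk1 : tk (k+1) = ((k:ℝ) + 1) * ε := by rw [htkk]; push_cast; ring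
    rw [hBdef t ω']
    rw [Finset.sum_eq_single k]
    · have htmem : t ∈ Set.Ioc ((k:ℝ) * ε) (((k:ℝ) + 1) * ε) := by
        refine ⟨?_, ?_⟩
        · rw [← htkk k]; exact ht.1
        · rw [← htkk1]; exact ht.2
      rw [Set.indicator_of_mem htmem, mul_one]
    · intro j hj hjk
      have hjmem : t ∉ Set.Ioc ((j:ℝ) * ε) (((j:ℝ) + 1) * ε) := by
        intro hcon
        apply hjk
        have h1 : (j:ℝ) * ε < t := hcon.1
        have h2 : t ≤ ((j:ℝ) + 1) * ε := hcon.2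
        have h3 : (k:ℝ) * ε < t := by rw [← htkk k]; exact ht.1
        have h4 : t ≤ ((k:ℝ) + 1) * ε := by rw [← htkk1]; exact ht.2
        have hjlt : (j:ℝ) < (k:ℝ) + 1 := lt_of_mul_lt_mul_right (lt_of_lt_of_le h1 h4) hε0.le
        have hklt : (k:ℝ) < (j:ℝ) + 1 := lt_of_mul_lt_mul_right (lt_of_lt_of_le h3 h2) hε0.le
        have hj1 : j < k + 1 := by exact_mod_cast hjlt
        have hk1' : k < j + 1 := by exact_mod_cast hklt
        omega
      rw [Set.indicator_of_notMem hjmem, mul_zero]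
    · intro hkmem
      exact absurd (Finset.mem_Ico.mpr ⟨hk1, hk2⟩) hkmem
  -- pointwise comparison with the block-average deviation
  have hpt : ∀ ω, ENNReal.ofReal (Gm n ω) ≤
      ∫⁻ t in Set.Ioc (0:ℝ) T, ENNReal.ofReal |h t ω - blockAvg T ε h t ω| := by
    intro ω
    set C : ℝ := ∑ k ∈ Finset.Ico 1 (2*n), |ε⁻¹ * ∫ s in (((k:ℝ) - 1) * ε)..((k:ℝ) * ε), h s ω|
      with hC
    have hBbound : ∀ t, |blockAvg T ε h t ω| ≤ C := by
      intro t
      rw [hBdef t ω, hC]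
      refine (Finset.abs_sum_le_sum_abs _ _).trans ?_
      refine Finset.sum_le_sum fun k _ => ?_
      rw [abs_mul]
      by_cases htm : t ∈ Set.Ioc ((k:ℝ) * ε) (((k:ℝ) + 1) * ε)
      · rw [Set.indicator_of_mem htm]; simp
      · rw [Set.indicator_of_notMem htm]; simp [abs_nonneg]; positivity
    have hBmeas : Measurable fun t => blockAvg T ε h t ω := by
      have heq : (fun t => blockAvg T ε h t ω) = fun t =>
          ∑ k ∈ Finset.Ico 1 (2*n), (ε⁻¹ * ∫ s in (((k:ℝ) - 1) * ε)..((k:ℝ) * ε), h s ω) *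
            Set.indicator (Set.Ioc ((k:ℝ) * ε) (((k:ℝ) + 1) * ε)) (fun _ => (1:ℝ)) t := by
        funext t; exact hBdef t ω
      rw [heq]
      refine Finset.measurable_sum _ fun k _ => ?_
      exact (measurable_const.indicator measurableSet_Ioc).const_mul _
    by_cases hω : Dh ω = ⊤
    · -- non-integrable section: the right side is infinite
      suffices hD : (∫⁻ t in Set.Ioc (0:ℝ) T, ENNReal.ofReal |h t ω - blockAvg T ε h t ω|) = ⊤ by
        rw [hD]; exact le_top
      by_contra hfin
      have hptw : ∀ t, ENNReal.ofReal |h t ω| ≤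
          ENNReal.ofReal |h t ω - blockAvg T ε h t ω| + ENNReal.ofReal |blockAvg T ε h t ω| := by
        intro t
        have h1 : |h t ω| ≤ |h t ω - blockAvg T ε h t ω| + |blockAvg T ε h t ω| := by
          have := abs_add_le (h t ω - blockAvg T ε h t ω) (blockAvg T ε h t ω)
          simpa using this
        calc ENNReal.ofReal |h t ω|
            ≤ ENNReal.ofReal (|h t ω - blockAvg T ε h t ω| + |blockAvg T ε h t ω|) :=
              ENNReal.ofReal_le_ofReal h1
          _ = _ := ENNReal.ofReal_add (abs_nonneg _) (abs_nonneg _)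
      have hsub : Dh ω ≤ (∫⁻ t in Set.Ioc (0:ℝ) T, ENNReal.ofReal |h t ω - blockAvg T ε h t ω|) +
          ∫⁻ t in Set.Ioc (0:ℝ) T, ENNReal.ofReal |blockAvg T ε h t ω| := by
        rw [hDhdef]
        calc (∫⁻ t in Set.Ioc (0:ℝ) T, ENNReal.ofReal |h t ω|)
            ≤ ∫⁻ t in Set.Ioc (0:ℝ) T,
              (ENNReal.ofReal |h t ω - blockAvg T ε h t ω| +
                ENNReal.ofReal |blockAvg T ε h t ω|) :=
              lintegral_mono fun t => hptw t
          _ = _ := lintegral_add_right _ hBmeas.abs.ennreal_ofReal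
      have hBfin : (∫⁻ t in Set.Ioc (0:ℝ) T, ENNReal.ofReal |blockAvg T ε h t ω|) < ⊤ := by
        calc (∫⁻ t in Set.Ioc (0:ℝ) T, ENNReal.ofReal |blockAvg T ε h t ω|)
            ≤ ∫⁻ _t in Set.Ioc (0:ℝ) T, ENNReal.ofReal C :=
              lintegral_mono fun t => ENNReal.ofReal_le_ofReal (hBbound t)
          _ = ENNReal.ofReal C * volume (Set.Ioc (0:ℝ) T) := setLIntegral_const _ _
          _ < ⊤ := ENNReal.mul_lt_top ENNReal.ofReal_lt_top measure_Ioc_lt_top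
      have hlt : Dh ω < ⊤ :=
        lt_of_le_of_lt hsub (ENNReal.add_lt_top.2 ⟨lt_top_iff_ne_top.2 hfin, hBfin⟩)
      exact absurd hω hlt.ne
    · -- integrable section
      have hInt : IntegrableOn (fun t => h t ω) (Set.Ioc 0 T) volume := hIntOn ω hω
      haveI hfm : IsFiniteMeasure (volume.restrict (Set.Ioc (0:ℝ) T)) :=
        ⟨by rw [Measure.restrict_apply_univ]; exact measure_Ioc_lt_top⟩
      have hBint : IntegrableOn (fun t => blockAvg T ε h t ω) (Set.Ioc 0 T) volume := by
        refine ⟨hBmeas.aestronglyMeasurable, ?_⟩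
        refine HasFiniteIntegral.of_bounded (C := C) ?_
        exact Filter.Eventually.of_forall fun t => by
          rw [Real.norm_eq_abs]; exact hBbound t
      have hdiffint : IntegrableOn (fun t => |h t ω - blockAvg T ε h t ω|)
          (Set.Ioc 0 T) volume := (hInt.sub hBint).abs
      have hAincr : ∀ u v : ℝ, 0 ≤ u → u ≤ v → v ≤ T →
          A v ω - A u ω = ∫ t in Set.Ioc u v, h t ω := by
        intro u v hu huv hvT
        have hiu : IntervalIntegrable (fun t => h t ω) volume 0 u := by
          rw [intervalIntegrable_iff_integrableOn_Ioc_of_le hu]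
          exact hInt.mono_set (Set.Ioc_subset_Ioc_right (huv.trans hvT))
        have hiv : IntervalIntegrable (fun t => h t ω) volume 0 v := by
          rw [intervalIntegrable_iff_integrableOn_Ioc_of_le (hu.trans huv)]
          exact hInt.mono_set (Set.Ioc_subset_Ioc_right hvT)
        rw [hA v ω, hA u ω, intervalIntegral.integral_interval_sub_left hiv hiu,
          intervalIntegral.integral_of_le huv]
      have hkey : ∀ i, i < n → |Dk (2*i+1) ω - Dk (2*i) ω| ≤
          ∫ t in Set.Ioc (tk (2*i+1)) (tk (2*i+2)), |h t ω - blockAvg T ε h t ω| := by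
        intro i hi
        have hmem1 : (0:ℝ) ≤ tk (2*i+1) := (htk_mem _ (by omega)).1
        have hmem2 : tk (2*i+2) ≤ T := (htk_mem _ (by omega)).2
        have hle12 : tk (2*i+1) ≤ tk (2*i+2) := htk_mono (by omega)
        have hSsub : Set.Ioc (tk (2*i+1)) (tk (2*i+2)) ⊆ Set.Ioc (0:ℝ) T :=
          Set.Ioc_subset_Ioc hmem1 hmem2
        have h1 : Dk (2*i+1) ω = ∫ t in Set.Ioc (tk (2*i+1)) (tk (2*i+2)), h t ω := by
          rw [hDkdef]
          have h12 : 2*i+1+1 = 2*i+2 := by omega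
          rw [h12]
          exact hAincr _ _ hmem1 hle12 hmem2
        have hc : ∀ t ∈ Set.Ioc (tk (2*i+1)) (tk (2*i+2)), blockAvg T ε h t ω =
            ε⁻¹ * Dk (2*i) ω := by
          intro t ht
          have ht' : t ∈ Set.Ioc (tk (2*i+1)) (tk ((2*i+1)+1)) := by
            rw [show (2*i+1)+1 = 2*i+2 from by omega]; exact ht
          have heval := hBeval (2*i+1) (by omega) (by omega) t ht' ω
          rw [heval]
          congr 1
          have hlo : (((2*i+1 : ℕ):ℝ) - 1) * ε = tk (2*i) := by rw [htkk]; push_cast; ring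
          have hhi : ((2*i+1 : ℕ):ℝ) * ε = tk (2*i+1) := by rw [htkk]
          rw [hlo, hhi, intervalIntegral.integral_of_le (htk_mono (by omega : 2*i ≤ 2*i+1))]
          rw [hDkdef]
          exact (hAincr (tk (2*i)) (tk (2*i+1)) (htk_mem _ (by omega)).1
            (htk_mono (by omega)) (htk_mem _ (by omega)).2).symm
        have h2 : (∫ t in Set.Ioc (tk (2*i+1)) (tk (2*i+2)), blockAvg T ε h t ω) =
            Dk (2*i) ω := by
          rw [setIntegral_congr_fun measurableSet_Ioc hc, setIntegral_const, Real.volume_real_Ioc]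
          have hεeq : tk (2*i+2) - tk (2*i+1) = ε := by rw [htkk, htkk]; push_cast; ring
          rw [hεeq, max_eq_left hε0.le, smul_eq_mul, ← mul_assoc,
            mul_inv_cancel₀ hε0.ne', one_mul]
        have h3 : Dk (2*i+1) ω - Dk (2*i) ω =
            ∫ t in Set.Ioc (tk (2*i+1)) (tk (2*i+2)), (h t ω - blockAvg T ε h t ω) := by
          rw [integral_sub (hInt.mono_set hSsub) (hBint.mono_set hSsub), ← h1, ← h2]
        rw [h3]
        simpa [Real.norm_eq_abs] using
          norm_integral_le_integral_norm
            (μ := volume.restrict (Set.Ioc (tk (2*i+1)) (tk (2*i+2))))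
            (fun t => h t ω - blockAvg T ε h t ω)
      have hdisj : Set.Pairwise ↑(Finset.range n)
          (Function.onFun Disjoint (fun i => Set.Ioc (tk (2*i+1)) (tk (2*i+2)))) := by
        intro i _ j _ hij
        refine Set.Ioc_disjoint_Ioc.2 ?_
        rcases lt_or_gt_of_ne hij with hlt | hgt
        · exact le_trans (min_le_left _ _) (le_trans (htk_mono (by omega)) (le_max_right _ _))
        · exact le_trans (min_le_right _ _) (le_trans (htk_mono (by omega)) (le_max_left _ _))
      have hUsub : (⋃ i ∈ Finset.range n, Set.Ioc (tk (2*i+1)) (tk (2*i+2))) ⊆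
          Set.Ioc (0:ℝ) T := by
        intro x hx
        simp only [Set.mem_iUnion, Finset.mem_range] at hx
        obtain ⟨i, hi, hxi⟩ := hx
        exact Set.Ioc_subset_Ioc (htk_mem _ (by omega)).1 (htk_mem _ (by omega)).2 hxi
      have hsum : (∑ i ∈ Finset.range n, ∫ t in Set.Ioc (tk (2*i+1)) (tk (2*i+2)),
          |h t ω - blockAvg T ε h t ω|) ≤
          ∫ t in Set.Ioc (0:ℝ) T, |h t ω - blockAvg T ε h t ω| := by
        rw [← integral_biUnion_finset (Finset.range n) (fun i _ => measurableSet_Ioc) hdisj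
          (fun i hi => hdiffint.mono_set (by
            rw [Finset.mem_range] at hi
            exact Set.Ioc_subset_Ioc (htk_mem _ (by omega)).1 (htk_mem _ (by omega)).2))]
        refine setIntegral_mono_set hdiffint ?_ (HasSubset.Subset.eventuallyLE hUsub)
        exact Filter.Eventually.of_forall fun t => abs_nonneg _
      have hGR : Gm n ω ≤ ∫ t in Set.Ioc (0:ℝ) T, |h t ω - blockAvg T ε h t ω| := by
        simp only [hGmdef]
        exact le_trans (Finset.sum_le_sum fun i hi => hkey i (Finset.mem_range.1 hi)) hsum
      calc ENNReal.ofReal (Gm n ω)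
          ≤ ENNReal.ofReal (∫ t in Set.Ioc (0:ℝ) T, |h t ω - blockAvg T ε h t ω|) :=
            ENNReal.ofReal_le_ofReal hGR
        _ = ∫⁻ t in Set.Ioc (0:ℝ) T, ENNReal.ofReal |h t ω - blockAvg T ε h t ω| :=
            ofReal_integral_eq_lintegral_ofReal hdiffint
              (Filter.Eventually.of_forall fun t => abs_nonneg _)
  -- final assembly
  have hMdeq : M1norm 𝔓 T (fun t ω => h t ω - blockAvg T ε h t ω) =
      ⨆ P : 𝔓, ∫⁻ ω, (∫⁻ t in Set.Ioc (0:ℝ) T, ENNReal.ofReal |h t ω - blockAvg T ε h t ω|)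
        ∂(P : Measure Ω) := rfl
  by_cases hMdtop : M1norm 𝔓 T (fun t ω => h t ω - blockAvg T ε h t ω) = ⊤
  · rw [hMdtop]
    simp
  · have hMdle : ∀ P ∈ 𝔓, ∫ ω, Gm n ω ∂(P : Measure Ω) ≤
        (M1norm 𝔓 T (fun t ω => h t ω - blockAvg T ε h t ω)).toReal := by
      intro P hP
      haveI := hprob P hP
      refine (ENNReal.ofReal_le_iff_le_toReal hMdtop).1 ?_
      rw [ofReal_integral_eq_lintegral_ofReal (hGmi n le_rfl P hP)
        (Filter.Eventually.of_forall (hGmnonneg n))]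
      refine le_trans (lintegral_mono fun ω => hpt ω) ?_
      rw [hMdeq]
      exact le_iSup (fun Q : 𝔓 => ∫⁻ ω, (∫⁻ t in Set.Ioc (0:ℝ) T,
        ENNReal.ofReal |h t ω - blockAvg T ε h t ω|) ∂(Q : Measure Ω)) ⟨P, hP⟩
    have hGle : sublinearE 𝔓 (Gm n) ≤
        (M1norm 𝔓 T (fun t ω => h t ω - blockAvg T ε h t ω)).toReal :=
      sublinearE_le h𝔓 hMdle
    have hfin := main n le_rfl
    rw [htkT] at hfin
    have hreal : sublinearE 𝔓 (A T) + sublinearE 𝔓 (fun ω => -A T ω) ≤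
        2 * (M1norm 𝔓 T (fun t ω => h t ω - blockAvg T ε h t ω)).toReal := by linarith
    calc ENNReal.ofReal (sublinearE 𝔓 (A T) + sublinearE 𝔓 (fun ω => -A T ω))
        ≤ ENNReal.ofReal
            (2 * (M1norm 𝔓 T (fun t ω => h t ω - blockAvg T ε h t ω)).toReal) :=
          ENNReal.ofReal_le_ofReal hreal
      _ = 2 * M1norm 𝔓 T (fun t ω => h t ω - blockAvg T ε h t ω) := by
          rw [ENNReal.ofReal_mul (by norm_num : (0:ℝ) ≤ 2),
            ENNReal.ofReal_toReal hMdtop]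
          norm_num
end
end

section
/- For every η ∈ M¹(𝒫), both ‖η^ε − η‖_{M¹} → 0 and ‖η^{ε,0} − η‖_{M¹} → 0 as ε → 0, where η^ε is the moving average and η^{ε,0} the block average of η. -/
open MeasureTheory Filter
open scoped ENNReal

noncomputable section

variable {Ω : Type*} [MeasurableSpace Ω]

section AuxStmt4
open Set

lemma ofReal_abs_intervalIntegral_le {f : ℝ → ℝ} {a b : ℝ} (hab : a ≤ b) :
    ENNReal.ofReal |∫ s in a..b, f s| ≤ ∫⁻ s in Ioc a b, ENNReal.ofReal |f s| := by
  by_cases h : IntervalIntegrable f volume a b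
  · have h1 : |∫ s in a..b, f s| ≤ ∫ s in a..b, |f s| :=
      intervalIntegral.abs_integral_le_integral_abs hab
    have h2 : (∫ s in a..b, |f s|) = ∫ s in Ioc a b, |f s| :=
      intervalIntegral.integral_of_le hab
    have habs : IntegrableOn (fun s => |f s|) (Ioc a b) volume := by
      have := (intervalIntegrable_iff.mp h)
      rw [uIoc_of_le hab] at this
      exact this.abs
    calc ENNReal.ofReal |∫ s in a..b, f s| ≤ ENNReal.ofReal (∫ s in Ioc a b, |f s|) :=
          ENNReal.ofReal_le_ofReal (h2 ▸ h1)
      _ = ∫⁻ s in Ioc a b, ENNReal.ofReal |f s| :=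
          ofReal_integral_eq_lintegral_ofReal habs (Filter.Eventually.of_forall fun x => abs_nonneg _)
  · rw [intervalIntegral.integral_undef h]
    simp

lemma lintegral_movAvg_le' {T ε : ℝ} (hε : 0 < ε) {f : ℝ → ℝ} (hf : Measurable f) :
    ∫⁻ t in Ioc (0:ℝ) T, ENNReal.ofReal |ε⁻¹ * ∫ s in (max (t-ε) 0)..t, f s|
      ≤ ∫⁻ s in Ioc (0:ℝ) T, ENNReal.ofReal |f s| := by
  set g : ℝ → ℝ≥0∞ := fun s => ENNReal.ofReal |f s| with hg
  set F : ℝ → ℝ → ℝ≥0∞ := fun t s =>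
    {q : ℝ × ℝ | max (q.1 - ε) 0 < q.2 ∧ q.2 ≤ q.1}.indicator (fun q => g q.2) (t, s) with hF
  have hFmeas : Measurable (Function.uncurry F) := by
    apply Measurable.indicator
    · exact (ENNReal.measurable_ofReal.comp ((measurable_abs.comp hf).comp measurable_snd))
    · apply MeasurableSet.inter
      · exact measurableSet_lt ((measurable_fst.sub measurable_const).max measurable_const)
          measurable_snd
      · exact measurableSet_le measurable_snd measurable_fst
  have hFeq : ∀ t s, F t s = (Ioc (max (t-ε) 0) t).indicator g s := by
    intro t s
    have hiff : ((t,s) ∈ {q : ℝ × ℝ | max (q.1 - ε) 0 < q.2 ∧ q.2 ≤ q.1})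
        ↔ s ∈ Ioc (max (t-ε) 0) t := by simp [mem_Ioc]
    by_cases h : s ∈ Ioc (max (t-ε) 0) t
    · rw [Set.indicator_of_mem h]
      exact Set.indicator_of_mem (hiff.mpr h) _
    · rw [Set.indicator_of_notMem h]
      exact Set.indicator_of_notMem (fun hm => h (hiff.mp hm)) _
  have step1 : ∫⁻ t in Ioc (0:ℝ) T, ENNReal.ofReal |ε⁻¹ * ∫ s in (max (t-ε) 0)..t, f s|
      ≤ ∫⁻ t in Ioc (0:ℝ) T, ENNReal.ofReal ε⁻¹ * ∫⁻ s, F t s := by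
    refine lintegral_mono_ae ?_
    filter_upwards [ae_restrict_mem measurableSet_Ioc] with t ht
    have hle : max (t - ε) 0 ≤ t := max_le (by linarith) ht.1.le
    rw [abs_mul, abs_of_nonneg (inv_nonneg.mpr hε.le),
      ENNReal.ofReal_mul (inv_nonneg.mpr hε.le)]
    gcongr
    calc ENNReal.ofReal |∫ s in (max (t-ε) 0)..t, f s|
        ≤ ∫⁻ s in Ioc (max (t-ε) 0) t, g s := ofReal_abs_intervalIntegral_le hle
      _ = ∫⁻ s, (Ioc (max (t-ε) 0) t).indicator g s := (lintegral_indicator measurableSet_Ioc g).symm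
      _ = ∫⁻ s, F t s := by simp_rw [hFeq]
  have step2 : ∫⁻ t in Ioc (0:ℝ) T, ENNReal.ofReal ε⁻¹ * ∫⁻ s, F t s
      = ENNReal.ofReal ε⁻¹ * ∫⁻ s, ∫⁻ t in Ioc (0:ℝ) T, F t s := by
    rw [lintegral_const_mul' _ _ ENNReal.ofReal_ne_top]
    congr 1
    exact lintegral_lintegral_swap hFmeas.aemeasurable
  have step3 : ∀ s, ∫⁻ t in Ioc (0:ℝ) T, F t s
      ≤ (Ioc (0:ℝ) T).indicator (fun s => ENNReal.ofReal ε * g s) s := by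
    intro s
    by_cases hs : s ∈ Ioc (0:ℝ) T
    · rw [Set.indicator_of_mem hs]
      calc ∫⁻ t in Ioc (0:ℝ) T, F t s ≤ ∫⁻ t, F t s := setLIntegral_le_lintegral _ _
        _ ≤ ∫⁻ t, (Ico s (s+ε)).indicator (fun _ => g s) t := by
            refine lintegral_mono fun t => ?_
            by_cases h : max (t - ε) 0 < s ∧ s ≤ t
            · have ht : t ∈ Ico s (s+ε) := by
                constructor
                · exact h.2
                · have : t - ε < s := lt_of_le_of_lt (le_max_left _ _) h.1
                  linarith
              rw [Set.indicator_of_mem ht, hFeq t s,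
                Set.indicator_of_mem (mem_Ioc.mpr h)]
            · rw [hFeq t s, Set.indicator_of_notMem (fun hm => h (mem_Ioc.mp hm))]
              exact zero_le
        _ = g s * ENNReal.ofReal ε := by
            rw [lintegral_indicator measurableSet_Ico, setLIntegral_const, Real.volume_Ico]
            congr 1; ring_nf
        _ = ENNReal.ofReal ε * g s := mul_comm _ _
    · rw [Set.indicator_of_notMem hs]
      have : ∀ᵐ t ∂(volume.restrict (Ioc (0:ℝ) T)), F t s = 0 := by
        filter_upwards [ae_restrict_mem measurableSet_Ioc] with t ht
        rw [hFeq t s]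
        refine Set.indicator_of_notMem (fun hmem => ?_) _
        rw [mem_Ioc] at hmem
        rw [mem_Ioc, not_and_or] at hs
        rcases hs with hs | hs
        · push_neg at hs
          exact absurd (lt_of_le_of_lt (le_max_right _ _) hmem.1) (not_lt.mpr hs)
        · push_neg at hs
          exact absurd (hmem.2.trans ht.2) (not_le.mpr hs)
      exact le_of_eq ((lintegral_congr_ae this).trans lintegral_zero)
  calc ∫⁻ t in Ioc (0:ℝ) T, ENNReal.ofReal |ε⁻¹ * ∫ s in (max (t-ε) 0)..t, f s|
      ≤ ENNReal.ofReal ε⁻¹ * ∫⁻ s, ∫⁻ t in Ioc (0:ℝ) T, F t s := step1.trans step2.le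
    _ ≤ ENNReal.ofReal ε⁻¹ * ∫⁻ s, (Ioc (0:ℝ) T).indicator (fun s => ENNReal.ofReal ε * g s) s := by
        gcongr; exact step3 _
    _ = ENNReal.ofReal ε⁻¹ * (ENNReal.ofReal ε * ∫⁻ s in Ioc (0:ℝ) T, g s) := by
        rw [lintegral_indicator measurableSet_Ioc, lintegral_const_mul' _ _ ENNReal.ofReal_ne_top]
    _ = ∫⁻ s in Ioc (0:ℝ) T, g s := by
        rw [← mul_assoc, ← ENNReal.ofReal_mul (inv_nonneg.mpr hε.le),
          inv_mul_cancel₀ hε.ne', ENNReal.ofReal_one, one_mul]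


lemma block_disjoint {ε : ℝ} (hε : 0 < ε) {j k : ℕ} (hjk : j ≠ k) {s : ℝ}
    (hj : s ∈ Ioc (((j:ℝ)-1)*ε) ((j:ℝ)*ε)) (hk : s ∈ Ioc (((k:ℝ)-1)*ε) ((k:ℝ)*ε)) : False := by
  rcases lt_or_gt_of_ne hjk with h | h
  · have hjr : (j:ℝ) ≤ (k:ℝ) - 1 := by
      have : (j:ℝ) + 1 ≤ (k:ℝ) := by exact_mod_cast h
      linarith
    have : s ≤ ((k:ℝ)-1) * ε := hj.2.trans (by nlinarith)
    exact absurd hk.1 (not_lt.mpr this)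
  · have hkr : (k:ℝ) ≤ (j:ℝ) - 1 := by
      have : (k:ℝ) + 1 ≤ (j:ℝ) := by exact_mod_cast h
      linarith
    have : s ≤ ((j:ℝ)-1) * ε := hk.2.trans (by nlinarith)
    exact absurd hj.1 (not_lt.mpr this)

lemma lintegral_blockAvg_le' {T ε : ℝ} (hT : 0 < T) (hε : 0 < ε) {f : ℝ → ℝ} (hf : Measurable f) :
    ∫⁻ t in Ioc (0:ℝ) T, ENNReal.ofReal
        |∑ k ∈ Finset.Ico 1 (Nat.floor (T / ε)),
          (ε⁻¹ * ∫ s in (((k:ℝ) - 1) * ε)..((k:ℝ) * ε), f s) *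
            Set.indicator (Set.Ioc ((k:ℝ) * ε) (((k:ℝ) + 1) * ε)) (fun _ => (1:ℝ)) t|
      ≤ ∫⁻ s in Ioc (0:ℝ) T, ENNReal.ofReal |f s| := by
  set K := Nat.floor (T / ε) with hK
  set g : ℝ → ℝ≥0∞ := fun s => ENNReal.ofReal |f s| with hg
  set a : ℕ → ℝ := fun k => ε⁻¹ * ∫ s in (((k:ℝ) - 1) * ε)..((k:ℝ) * ε), f s with ha
  have hKle : (K:ℝ) * ε ≤ T := by
    have : (K:ℝ) ≤ T / ε := Nat.floor_le (div_nonneg hT.le hε.le)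
    calc (K:ℝ) * ε ≤ (T/ε) * ε := by nlinarith
      _ = T := div_mul_cancel₀ _ hε.ne'
  -- pointwise bound
  have hpt : ∀ t, ENNReal.ofReal |∑ k ∈ Finset.Ico 1 K,
        a k * Set.indicator (Set.Ioc ((k:ℝ) * ε) (((k:ℝ) + 1) * ε)) (fun _ => (1:ℝ)) t|
      ≤ ∑ k ∈ Finset.Ico 1 K,
        Set.indicator (Set.Ioc ((k:ℝ) * ε) (((k:ℝ) + 1) * ε)) (fun _ => ENNReal.ofReal |a k|) t := by
    intro t
    calc ENNReal.ofReal |∑ k ∈ Finset.Ico 1 K,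
          a k * Set.indicator (Set.Ioc ((k:ℝ) * ε) (((k:ℝ) + 1) * ε)) (fun _ => (1:ℝ)) t|
        ≤ ENNReal.ofReal (∑ k ∈ Finset.Ico 1 K,
            |a k * Set.indicator (Set.Ioc ((k:ℝ) * ε) (((k:ℝ) + 1) * ε)) (fun _ => (1:ℝ)) t|) :=
          ENNReal.ofReal_le_ofReal (Finset.abs_sum_le_sum_abs _ _)
      _ = ∑ k ∈ Finset.Ico 1 K, ENNReal.ofReal
            |a k * Set.indicator (Set.Ioc ((k:ℝ) * ε) (((k:ℝ) + 1) * ε)) (fun _ => (1:ℝ)) t| :=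
          ENNReal.ofReal_sum_of_nonneg (fun i _ => abs_nonneg _)
      _ ≤ ∑ k ∈ Finset.Ico 1 K,
            Set.indicator (Set.Ioc ((k:ℝ) * ε) (((k:ℝ) + 1) * ε)) (fun _ => ENNReal.ofReal |a k|) t := by
          refine Finset.sum_le_sum fun k _ => ?_
          by_cases h : t ∈ Set.Ioc ((k:ℝ) * ε) (((k:ℝ) + 1) * ε)
          · rw [Set.indicator_of_mem h, Set.indicator_of_mem h, mul_one]
          · rw [Set.indicator_of_notMem h, Set.indicator_of_notMem h, mul_zero, abs_zero,
              ENNReal.ofReal_zero]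
    -- integrate
  calc ∫⁻ t in Ioc (0:ℝ) T, ENNReal.ofReal |∑ k ∈ Finset.Ico 1 K,
          a k * Set.indicator (Set.Ioc ((k:ℝ) * ε) (((k:ℝ) + 1) * ε)) (fun _ => (1:ℝ)) t|
      ≤ ∫⁻ t in Ioc (0:ℝ) T, ∑ k ∈ Finset.Ico 1 K,
          Set.indicator (Set.Ioc ((k:ℝ) * ε) (((k:ℝ) + 1) * ε)) (fun _ => ENNReal.ofReal |a k|) t :=
        lintegral_mono hpt
    _ = ∑ k ∈ Finset.Ico 1 K, ∫⁻ t in Ioc (0:ℝ) T,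
          Set.indicator (Set.Ioc ((k:ℝ) * ε) (((k:ℝ) + 1) * ε)) (fun _ => ENNReal.ofReal |a k|) t :=
        lintegral_finset_sum _ (fun k _ => measurable_const.indicator measurableSet_Ioc)
    _ ≤ ∑ k ∈ Finset.Ico 1 K, ∫⁻ s in Ioc (((k:ℝ)-1)*ε) ((k:ℝ)*ε), g s := by
        refine Finset.sum_le_sum fun k _ => ?_
        calc ∫⁻ t in Ioc (0:ℝ) T,
              Set.indicator (Set.Ioc ((k:ℝ) * ε) (((k:ℝ) + 1) * ε)) (fun _ => ENNReal.ofReal |a k|) t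
            = ENNReal.ofReal |a k| * (volume.restrict (Ioc (0:ℝ) T)) (Set.Ioc ((k:ℝ) * ε) (((k:ℝ) + 1) * ε)) := by
              rw [lintegral_indicator measurableSet_Ioc, setLIntegral_const]
          _ ≤ ENNReal.ofReal |a k| * ENNReal.ofReal ε := by
              gcongr
              calc (volume.restrict (Ioc (0:ℝ) T)) (Set.Ioc ((k:ℝ) * ε) (((k:ℝ) + 1) * ε))
                  ≤ volume (Set.Ioc ((k:ℝ) * ε) (((k:ℝ) + 1) * ε)) := Measure.restrict_le_self _
                _ = ENNReal.ofReal ε := by rw [Real.volume_Ioc]; congr 1; ring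
          _ ≤ (ENNReal.ofReal ε⁻¹ * ∫⁻ s in Ioc (((k:ℝ)-1)*ε) ((k:ℝ)*ε), g s) * ENNReal.ofReal ε := by
              gcongr
              rw [ha]
              simp only
              rw [abs_mul, abs_of_nonneg (inv_nonneg.mpr hε.le),
                ENNReal.ofReal_mul (inv_nonneg.mpr hε.le)]
              gcongr
              exact ofReal_abs_intervalIntegral_le (by nlinarith)
          _ = ∫⁻ s in Ioc (((k:ℝ)-1)*ε) ((k:ℝ)*ε), g s := by
              rw [mul_comm, ← mul_assoc, ← ENNReal.ofReal_mul hε.le,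
                mul_inv_cancel₀ hε.ne', ENNReal.ofReal_one, one_mul]
    _ ≤ ∫⁻ s in Ioc (0:ℝ) T, g s := by
        have : ∀ k, ∫⁻ s in Ioc (((k:ℝ)-1)*ε) ((k:ℝ)*ε), g s
            = ∫⁻ s, (Ioc (((k:ℝ)-1)*ε) ((k:ℝ)*ε)).indicator g s :=
          fun k => (lintegral_indicator measurableSet_Ioc g).symm
        simp_rw [this]
        have hgm : Measurable g := hf.abs.ennreal_ofReal
        rw [← lintegral_finset_sum _ (fun (k : ℕ) (_ : k ∈ Finset.Ico 1 K) =>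
            (hgm.indicator (measurableSet_Ioc (a := ((k:ℝ)-1)*ε) (b := (k:ℝ)*ε)))),
          ← lintegral_indicator measurableSet_Ioc g]
        refine lintegral_mono fun s => ?_
        by_cases hex : ∃ k0 ∈ Finset.Ico 1 K, s ∈ Ioc (((k0:ℝ)-1)*ε) ((k0:ℝ)*ε)
        · obtain ⟨k0, hk0mem, hk0⟩ := hex
          rw [Finset.sum_eq_single_of_mem k0 hk0mem (fun j _ hj => by
            refine Set.indicator_of_notMem (fun hmem => ?_) _
            exact block_disjoint hε hj hmem hk0)]
          rw [Set.indicator_of_mem hk0]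
          have hk01 : 1 ≤ k0 := (Finset.mem_Ico.mp hk0mem).1
          have hk0K : k0 < K := (Finset.mem_Ico.mp hk0mem).2
          have hsI : s ∈ Ioc (0:ℝ) T := by
            constructor
            · refine lt_of_le_of_lt ?_ hk0.1
              have : (1:ℝ) ≤ (k0:ℝ) := by exact_mod_cast hk01
              nlinarith
            · refine hk0.2.trans ?_
              have : (k0:ℝ) ≤ (K:ℝ) := by exact_mod_cast hk0K.le
              nlinarith
          rw [Set.indicator_of_mem hsI]
        · push_neg at hex
          have : ∀ k ∈ Finset.Ico 1 K,
              (Ioc (((k:ℝ)-1)*ε) ((k:ℝ)*ε)).indicator g s = 0 :=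
            fun k hk => Set.indicator_of_notMem (hex k hk) _
          rw [Finset.sum_eq_zero this]
          exact zero_le


lemma meas_param_setIntegral {β : Type*} [MeasurableSpace β] {f : β × ℝ → ℝ}
    (hf : Measurable f) {a b : β → ℝ} (ha : Measurable a) (hb : Measurable b) :
    Measurable fun x => ∫ s in Ioc (a x) (b x), f (x, s) := by
  have key : ∀ x, (∫ s in Ioc (a x) (b x), f (x, s))
      = ∫ s, ({p : β × ℝ | a p.1 < p.2 ∧ p.2 ≤ b p.1}.indicator f) (x, s) := by
    intro x
    rw [← integral_indicator measurableSet_Ioc]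
    refine integral_congr_ae (Filter.Eventually.of_forall fun s => ?_)
    by_cases h : s ∈ Ioc (a x) (b x)
    · rw [Set.indicator_of_mem h]
      exact (Set.indicator_of_mem
        (show (x,s) ∈ {p : β × ℝ | a p.1 < p.2 ∧ p.2 ≤ b p.1} from mem_Ioc.mp h) f).symm
    · rw [Set.indicator_of_notMem h]
      exact (Set.indicator_of_notMem
        (fun hm : (x,s) ∈ {p : β × ℝ | a p.1 < p.2 ∧ p.2 ≤ b p.1} => h (mem_Ioc.mpr hm)) f).symm
  simp_rw [key]
  have hsm : StronglyMeasurable ({p : β × ℝ | a p.1 < p.2 ∧ p.2 ≤ b p.1}.indicator f) := by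
    refine (hf.indicator ?_).stronglyMeasurable
    exact (measurableSet_lt (ha.comp measurable_fst) measurable_snd).inter
      (measurableSet_le measurable_snd (hb.comp measurable_fst))
  exact hsm.integral_prod_right'.measurable

lemma measurable_uncurry_movAvg' {η : ℝ → Ω → ℝ}
    (hη : Measurable (Function.uncurry η)) (ε : ℝ) :
    Measurable (Function.uncurry (movAvg ε η)) := by
  have hf : Measurable fun q : (ℝ × Ω) × ℝ => η q.2 q.1.2 :=
    hη.comp ((measurable_snd).prodMk (measurable_snd.comp measurable_fst))
  have h1 : Measurable fun p : ℝ × Ω => ∫ s in Ioc (max (p.1 - ε) 0) p.1, η s p.2 :=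
    meas_param_setIntegral hf (((measurable_fst.sub measurable_const).max measurable_const))
      measurable_fst
  have h2 : Measurable fun p : ℝ × Ω => ∫ s in Ioc p.1 (max (p.1 - ε) 0), η s p.2 :=
    meas_param_setIntegral hf measurable_fst
      (((measurable_fst.sub measurable_const).max measurable_const))
  have : Function.uncurry (movAvg ε η) = fun p : ℝ × Ω =>
      ε⁻¹ * ((∫ s in Ioc (max (p.1 - ε) 0) p.1, η s p.2)
        - ∫ s in Ioc p.1 (max (p.1 - ε) 0), η s p.2) := by
    funext p
    rfl
  rw [this]
  exact measurable_const.mul (h1.sub h2)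

lemma measurable_uncurry_blockAvg' {η : ℝ → Ω → ℝ}
    (hη : Measurable (Function.uncurry η)) (T ε : ℝ) :
    Measurable (Function.uncurry (fun (t : ℝ) (ω : Ω) =>
      ∑ k ∈ Finset.Ico 1 (Nat.floor (T / ε)),
        (ε⁻¹ * ∫ s in (((k : ℝ) - 1) * ε)..((k : ℝ) * ε), η s ω) *
          Set.indicator (Set.Ioc ((k : ℝ) * ε) (((k : ℝ) + 1) * ε)) (fun _ => (1:ℝ)) t)) := by
  have hf : Measurable fun q : Ω × ℝ => η q.2 q.1 :=
    hη.comp (measurable_snd.prodMk measurable_fst)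
  have hcoef : ∀ k : ℕ, Measurable fun ω : Ω =>
      ∫ s in (((k : ℝ) - 1) * ε)..((k : ℝ) * ε), η s ω := by
    intro k
    have h1 : Measurable fun ω : Ω => ∫ s in Ioc (((k : ℝ) - 1) * ε) ((k : ℝ) * ε), η s ω :=
      meas_param_setIntegral hf measurable_const measurable_const
    have h2 : Measurable fun ω : Ω => ∫ s in Ioc ((k : ℝ) * ε) (((k : ℝ) - 1) * ε), η s ω :=
      meas_param_setIntegral hf measurable_const measurable_const
    have : (fun ω : Ω => ∫ s in (((k : ℝ) - 1) * ε)..((k : ℝ) * ε), η s ω)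
        = fun ω => (∫ s in Ioc (((k : ℝ) - 1) * ε) ((k : ℝ) * ε), η s ω)
          - ∫ s in Ioc ((k : ℝ) * ε) (((k : ℝ) - 1) * ε), η s ω := by
      funext ω; rfl
    rw [this]; exact h1.sub h2
  apply Finset.measurable_sum
  intro k _
  refine Measurable.mul ?_ ?_
  · exact measurable_const.mul ((hcoef k).comp measurable_snd)
  · exact (measurable_const.indicator measurableSet_Ioc).comp measurable_fst


/-- data of a step process, with a uniform bound. -/
theorem step_data' {T : ℝ} {ζ : ℝ → Ω → ℝ} (hζ : IsStepProcess T ζ) :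
    ∃ (C : ℝ) (N : ℕ) (τ : Fin (N + 1) → ℝ), 0 ≤ C ∧ τ 0 = 0 ∧
      (∀ s ω, |ζ s ω| ≤ C) ∧
      (∀ ω, Measurable (fun s => ζ s ω)) ∧
      (∀ (d u : ℝ) (ω : Ω), (∀ k, u ∉ Ioc (τ k) (τ k + d)) →
        ∀ s ∈ Ioc (u - d) u, ζ s ω = ζ u ω) := by
  obtain ⟨N, τ, ξ, h0, hlast, hmono, hmeas, hbdd, hrep⟩ := hζ
  set Cj : Fin N → ℝ := fun j => max ((hbdd j).choose) 0 with hCj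
  refine ⟨∑ j, Cj j, N, τ, Finset.sum_nonneg fun j _ => le_max_right _ _, h0, ?_, ?_, ?_⟩
  · intro s ω
    rw [hrep s ω]
    calc |∑ j, ξ j ω * Set.indicator (Set.Ioc (τ j.castSucc) (τ j.succ)) (fun _ => (1:ℝ)) s|
        ≤ ∑ j, |ξ j ω * Set.indicator (Set.Ioc (τ j.castSucc) (τ j.succ)) (fun _ => (1:ℝ)) s| :=
          Finset.abs_sum_le_sum_abs _ _
      _ ≤ ∑ j, Cj j := by
          refine Finset.sum_le_sum fun j _ => ?_
          rw [abs_mul]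
          have h1 : |ξ j ω| ≤ Cj j := le_trans ((hbdd j).choose_spec ω) (le_max_left _ _)
          have h2 : |Set.indicator (Set.Ioc (τ j.castSucc) (τ j.succ)) (fun _ => (1:ℝ)) s| ≤ 1 := by
            by_cases h : s ∈ Set.Ioc (τ j.castSucc) (τ j.succ)
            · rw [Set.indicator_of_mem h]; simp
            · rw [Set.indicator_of_notMem h]; simp
          calc |ξ j ω| * |Set.indicator (Set.Ioc (τ j.castSucc) (τ j.succ)) (fun _ => (1:ℝ)) s|
              ≤ Cj j * 1 := by
                apply mul_le_mul h1 h2 (abs_nonneg _) (le_trans (abs_nonneg _) h1)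
            _ = Cj j := mul_one _
  · intro ω
    have : (fun s => ζ s ω) = fun s =>
        ∑ j, ξ j ω * Set.indicator (Set.Ioc (τ j.castSucc) (τ j.succ)) (fun _ => (1:ℝ)) s := by
      funext s; exact hrep s ω
    rw [this]
    exact Finset.measurable_sum _ fun j _ =>
      measurable_const.mul (measurable_const.indicator measurableSet_Ioc)
  · intro d u ω hu s hs
    rw [hrep s ω, hrep u ω]
    refine Finset.sum_congr rfl fun j _ => ?_
    congr 1
    have hiff : s ∈ Set.Ioc (τ j.castSucc) (τ j.succ) ↔ u ∈ Set.Ioc (τ j.castSucc) (τ j.succ) := by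
      constructor
      · rintro ⟨hs1, hs2⟩
        refine ⟨lt_of_lt_of_le hs1 hs.2, ?_⟩
        by_contra hub
        push_neg at hub
        have h1 : u ∉ Ioc (τ j.succ) (τ j.succ + d) := hu j.succ
        rw [mem_Ioc, not_and_or] at h1
        rcases h1 with h1 | h1
        · exact absurd hub (not_lt.mpr (le_of_not_gt h1))
        · push_neg at h1
          have : s > τ j.succ := by
            have := hs.1; linarith
          exact absurd hs2 (not_le.mpr this)
      · rintro ⟨hu1, hu2⟩
        have h1 : u ∉ Ioc (τ j.castSucc) (τ j.castSucc + d) := hu j.castSucc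
        rw [mem_Ioc, not_and_or] at h1
        rcases h1 with h1 | h1
        · exact absurd hu1 (not_lt.mpr (le_of_not_gt h1))
        · push_neg at h1
          refine ⟨by linarith [hs.1], hs.2.trans hu2⟩
    by_cases h : s ∈ Set.Ioc (τ j.castSucc) (τ j.succ)
    · rw [Set.indicator_of_mem h, Set.indicator_of_mem (hiff.mp h)]
    · rw [Set.indicator_of_notMem h, Set.indicator_of_notMem (fun hm => h (hiff.mpr hm))]

lemma blockB_disjoint {ε : ℝ} (hε : 0 < ε) {j k : ℕ} (hjk : j ≠ k) {s : ℝ}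
    (hj : s ∈ Ioc ((j:ℝ)*ε) (((j:ℝ)+1)*ε)) (hk : s ∈ Ioc ((k:ℝ)*ε) (((k:ℝ)+1)*ε)) : False := by
  rcases lt_or_gt_of_ne hjk with h | h
  · have : (j:ℝ) + 1 ≤ (k:ℝ) := by exact_mod_cast h
    have : s ≤ (k:ℝ) * ε := hj.2.trans (by nlinarith)
    exact absurd hk.1 (not_lt.mpr this)
  · have : (k:ℝ) + 1 ≤ (j:ℝ) := by exact_mod_cast h
    have : s ≤ (j:ℝ) * ε := hk.2.trans (by nlinarith)
    exact absurd hj.1 (not_lt.mpr this)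

lemma intervalIntegrable_of_bounded_meas' {f : ℝ → ℝ} {C : ℝ} (hf : Measurable f)
    (hC : ∀ s, |f s| ≤ C) (a b : ℝ) : IntervalIntegrable f volume a b := by
  rw [intervalIntegrable_iff]
  haveI : IsFiniteMeasure (volume.restrict (Set.uIoc a b)) := by
    constructor
    rw [Measure.restrict_apply_univ, Set.uIoc, Real.volume_Ioc]
    exact ENNReal.ofReal_lt_top
  exact ⟨hf.aestronglyMeasurable,
    HasFiniteIntegral.of_bounded (Filter.Eventually.of_forall fun s => by
      simpa [Real.norm_eq_abs] using hC s)⟩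

lemma step_mov' {T : ℝ} (hT : 0 < T) {ζ : ℝ → Ω → ℝ} (hζ : IsStepProcess T ζ) :
    ∃ c : ℝ, 0 ≤ c ∧ ∀ ε : ℝ, 0 < ε → ∀ ω,
      ∫⁻ u in Ioc (0:ℝ) T, ENNReal.ofReal |movAvg ε ζ u ω - ζ u ω|
        ≤ ENNReal.ofReal (c * ε) := by
  obtain ⟨C, N, τ, hC, hτ0, hbound, hmeas, hconst⟩ := step_data' hζ
  refine ⟨2*C*((N:ℝ)+1), by positivity, fun ε hε ω => ?_⟩
  set bad : Set ℝ := ⋃ k : Fin (N+1), Ioc (τ k) (τ k + ε) with hbad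
  have hbadmeas : MeasurableSet bad := MeasurableSet.iUnion fun k => measurableSet_Ioc
  have key : ∀ u ∈ Ioc (0:ℝ) T, ENNReal.ofReal |movAvg ε ζ u ω - ζ u ω|
      ≤ bad.indicator (fun _ => ENNReal.ofReal (2*C)) u := by
    intro u hu
    by_cases hb : u ∈ bad
    · rw [Set.indicator_of_mem hb]
      refine ENNReal.ofReal_le_ofReal ?_
      have hle : max (u-ε) 0 ≤ u := max_le (by linarith) hu.1.le
      have h5 : ‖∫ s in (max (u-ε) 0)..u, ζ s ω‖ ≤ C * |u - max (u-ε) 0| :=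
        intervalIntegral.norm_integral_le_of_norm_le_const
          (fun x _ => by simpa [Real.norm_eq_abs] using hbound x ω)
      have h6 : |u - max (u-ε) 0| ≤ ε := by
        rw [abs_of_nonneg (by linarith)]
        have : u - ε ≤ max (u-ε) 0 := le_max_left _ _
        linarith
      have h7 : |movAvg ε ζ u ω| ≤ C := by
        rw [movAvg, abs_mul, abs_of_nonneg (inv_nonneg.mpr hε.le)]
        calc ε⁻¹ * |∫ s in (max (u-ε) 0)..u, ζ s ω| ≤ ε⁻¹ * (C * ε) := by
              have := h5.trans (by nlinarith : C * |u - max (u-ε) 0| ≤ C * ε)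
              rw [Real.norm_eq_abs] at this
              exact mul_le_mul_of_nonneg_left this (inv_nonneg.mpr hε.le)
          _ = C := by field_simp
      calc |movAvg ε ζ u ω - ζ u ω| ≤ |movAvg ε ζ u ω| + |ζ u ω| := abs_sub _ _
        _ ≤ C + C := add_le_add h7 (hbound u ω)
        _ = 2*C := by ring
    · rw [Set.indicator_of_notMem hb]
      have huk : ∀ k, u ∉ Ioc (τ k) (τ k + ε) := fun k hk => hb (mem_iUnion.mpr ⟨k, hk⟩)
      have hεu : ε < u := by
        have h1 := huk 0
        rw [hτ0, mem_Ioc, not_and_or] at h1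
        rcases h1 with h1 | h1
        · exact absurd hu.1 (by simpa using h1)
        · push_neg at h1; linarith [h1]
      have hmax : max (u-ε) 0 = u - ε := max_eq_left (by linarith)
      have heq : movAvg ε ζ u ω = ζ u ω := by
        rw [movAvg, hmax, intervalIntegral.integral_of_le (by linarith : u - ε ≤ u),
          setIntegral_congr_fun measurableSet_Ioc
            (fun s hs => hconst ε u ω huk s hs),
          setIntegral_const, measureReal_def, Real.volume_Ioc]
        rw [ENNReal.toReal_ofReal (by linarith : (0:ℝ) ≤ u - (u - ε))]
        rw [smul_eq_mul]
        field_simp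
        ring
      rw [heq, sub_self, abs_zero, ENNReal.ofReal_zero]
  calc ∫⁻ u in Ioc (0:ℝ) T, ENNReal.ofReal |movAvg ε ζ u ω - ζ u ω|
      ≤ ∫⁻ u in Ioc (0:ℝ) T, bad.indicator (fun _ => ENNReal.ofReal (2*C)) u := by
        refine lintegral_mono_ae ?_
        filter_upwards [ae_restrict_mem measurableSet_Ioc] with u hu
        exact key u hu
    _ = ENNReal.ofReal (2*C) * (volume.restrict (Ioc (0:ℝ) T)) bad := by
        rw [lintegral_indicator hbadmeas, setLIntegral_const]
    _ ≤ ENNReal.ofReal (2*C) * volume bad := by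
        gcongr
        exact Measure.restrict_le_self
    _ ≤ ENNReal.ofReal (2*C) * (((N:ℝ≥0∞)+1) * ENNReal.ofReal ε) := by
        gcongr
        calc volume bad ≤ ∑' k : Fin (N+1), volume (Ioc (τ k) (τ k + ε)) :=
              measure_iUnion_le _
          _ = ∑' _k : Fin (N+1), ENNReal.ofReal ε := by
              congr 1; funext k; rw [Real.volume_Ioc]; congr 1; ring
          _ = ((N:ℝ≥0∞)+1) * ENNReal.ofReal ε := by
              rw [tsum_fintype]
              simp [Finset.sum_const, nsmul_eq_mul]
    _ = ENNReal.ofReal (2*C*((N:ℝ)+1) * ε) := by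
        have : ((N:ℝ≥0∞)+1) = ENNReal.ofReal ((N:ℝ)+1) := by
          rw [ENNReal.ofReal_add (by positivity) zero_le_one]
          simp [ENNReal.ofReal_natCast]
        rw [this, ← ENNReal.ofReal_mul (by positivity), ← ENNReal.ofReal_mul (by positivity)]
        ring_nf

lemma step_block' {T : ℝ} (hT : 0 < T) {ζ : ℝ → Ω → ℝ} (hζ : IsStepProcess T ζ) :
    ∃ c : ℝ, 0 ≤ c ∧ ∀ ε : ℝ, 0 < ε → ∀ ω,
      ∫⁻ u in Ioc (0:ℝ) T, ENNReal.ofReal |blockAvg T ε ζ u ω - ζ u ω|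
        ≤ ENNReal.ofReal (c * ε) := by
  obtain ⟨C, N, τ, hC, hτ0, hbound, hmeas, hconst⟩ := step_data' hζ
  refine ⟨2*C*(2*(N:ℝ)+5), by positivity, fun ε hε ω => ?_⟩
  set K := Nat.floor (T/ε) with hK
  set bad : Set ℝ := (Ioc (0:ℝ) (2*ε) ∪ Ioc ((K:ℝ)*ε) T) ∪
    ⋃ k : Fin (N+1), Ioc (τ k) (τ k + 2*ε) with hbad
  have hbadmeas : MeasurableSet bad :=
    (measurableSet_Ioc.union measurableSet_Ioc).union
      (MeasurableSet.iUnion fun k => measurableSet_Ioc)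
  have hblock_bd : ∀ u, |blockAvg T ε ζ u ω| ≤ C := by
    intro u
    rw [blockAvg, ← hK]
    by_cases hex : ∃ k ∈ Finset.Ico 1 K, u ∈ Ioc ((k:ℝ)*ε) (((k:ℝ)+1)*ε)
    · obtain ⟨k0, hk0m, hk0⟩ := hex
      rw [Finset.sum_eq_single_of_mem k0 hk0m (fun j hj hne => by
        rw [Set.indicator_of_notMem (fun hm => blockB_disjoint hε hne hm hk0), mul_zero])]
      rw [Set.indicator_of_mem hk0, mul_one, abs_mul, abs_of_nonneg (inv_nonneg.mpr hε.le)]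
      have h5 : ‖∫ s in (((k0:ℝ)-1)*ε)..((k0:ℝ)*ε), ζ s ω‖ ≤ C * |(k0:ℝ)*ε - ((k0:ℝ)-1)*ε| :=
        intervalIntegral.norm_integral_le_of_norm_le_const
          (fun x _ => by simpa [Real.norm_eq_abs] using hbound x ω)
      rw [Real.norm_eq_abs] at h5
      have h6 : |(k0:ℝ)*ε - ((k0:ℝ)-1)*ε| = ε := by
        rw [abs_of_nonneg (by nlinarith)]; ring
      rw [h6] at h5
      calc ε⁻¹ * |∫ s in (((k0:ℝ)-1)*ε)..((k0:ℝ)*ε), ζ s ω| ≤ ε⁻¹ * (C * ε) :=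
            mul_le_mul_of_nonneg_left h5 (inv_nonneg.mpr hε.le)
        _ = C := by field_simp
    · push_neg at hex
      rw [Finset.sum_eq_zero (fun k hk => by
        rw [Set.indicator_of_notMem (hex k hk), mul_zero])]
      simpa using hC
  have key : ∀ u ∈ Ioc (0:ℝ) T, ENNReal.ofReal |blockAvg T ε ζ u ω - ζ u ω|
      ≤ bad.indicator (fun _ => ENNReal.ofReal (2*C)) u := by
    intro u hu
    by_cases hb : u ∈ bad
    · rw [Set.indicator_of_mem hb]
      refine ENNReal.ofReal_le_ofReal ?_
      calc |blockAvg T ε ζ u ω - ζ u ω| ≤ |blockAvg T ε ζ u ω| + |ζ u ω| := abs_sub _ _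
        _ ≤ C + C := add_le_add (hblock_bd u) (hbound u ω)
        _ = 2*C := by ring
    · rw [Set.indicator_of_notMem hb]
      rw [hbad, Set.mem_union, Set.mem_union, not_or, not_or] at hb
      obtain ⟨⟨hb1, hb2⟩, hb3⟩ := hb
      have hu3 : ∀ k, u ∉ Ioc (τ k) (τ k + 2*ε) := fun k hk => hb3 (mem_iUnion.mpr ⟨k, hk⟩)
      have hu2ε : 2*ε < u := by
        rw [mem_Ioc, not_and_or] at hb1
        rcases hb1 with h | h
        · exact absurd hu.1 (by simpa using h)
        · push_neg at h; linarith
      have huK : u ≤ (K:ℝ)*ε := by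
        rw [mem_Ioc, not_and_or] at hb2
        rcases hb2 with h | h
        · push_neg at h; linarith
        · exact absurd hu.2 h
      set m := Nat.ceil (u/ε) with hm
      have hm3 : 3 ≤ m := by
        have h2 : ((2:ℕ):ℝ) < u/ε := by
          push_cast
          rw [lt_div_iff₀ hε]; linarith
        have h3 : (2:ℕ) < m := Nat.lt_ceil.mpr h2
        omega
      set k0 := m - 1 with hk0def
      have hk0cast : (k0:ℝ) = (m:ℝ) - 1 := by
        rw [hk0def, Nat.cast_sub (by omega), Nat.cast_one]
      have hupper : u ≤ ((k0:ℝ)+1)*ε := by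
        have h1 : u/ε ≤ (m:ℝ) := Nat.le_ceil _
        have : u ≤ (m:ℝ)*ε := by
          rw [div_le_iff₀ hε] at h1; linarith
        rw [hk0cast]; linarith
      have hlower : (k0:ℝ)*ε < u := by
        have h1 : (m:ℝ) < u/ε + 1 := Nat.ceil_lt_add_one (div_nonneg (le_of_lt hu.1) hε.le)
        have h2 : (k0:ℝ) < u/ε := by rw [hk0cast]; linarith
        rw [← lt_div_iff₀ hε]
        exact h2
      have hk0K : k0 < K := by
        have : (k0:ℝ)*ε < (K:ℝ)*ε := lt_of_lt_of_le hlower huK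
        have : (k0:ℝ) < (K:ℝ) := lt_of_mul_lt_mul_right this hε.le
        exact_mod_cast this
      have hk0m : k0 ∈ Finset.Ico 1 K := Finset.mem_Ico.mpr ⟨by omega, hk0K⟩
      have humem : u ∈ Ioc ((k0:ℝ)*ε) (((k0:ℝ)+1)*ε) := ⟨hlower, hupper⟩
      have heq : blockAvg T ε ζ u ω = ζ u ω := by
        rw [blockAvg, ← hK]
        rw [Finset.sum_eq_single_of_mem k0 hk0m (fun j hj hne => by
          rw [Set.indicator_of_notMem (fun hm' => blockB_disjoint hε hne hm' humem), mul_zero])]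
        rw [Set.indicator_of_mem humem, mul_one]
        rw [intervalIntegral.integral_of_le (by nlinarith : ((k0:ℝ)-1)*ε ≤ (k0:ℝ)*ε)]
        rw [setIntegral_congr_fun measurableSet_Ioc
          (fun s hs => hconst (2*ε) u ω hu3 s
            ⟨by rcases hs with ⟨hs1, hs2⟩; nlinarith,
             by rcases hs with ⟨hs1, hs2⟩; nlinarith⟩)]
        rw [setIntegral_const, measureReal_def, Real.volume_Ioc]
        have harg : (k0:ℝ)*ε - ((k0:ℝ)-1)*ε = ε := by ring
        rw [harg, ENNReal.toReal_ofReal hε.le, smul_eq_mul]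
        field_simp
      rw [heq, sub_self, abs_zero, ENNReal.ofReal_zero]
  calc ∫⁻ u in Ioc (0:ℝ) T, ENNReal.ofReal |blockAvg T ε ζ u ω - ζ u ω|
      ≤ ∫⁻ u in Ioc (0:ℝ) T, bad.indicator (fun _ => ENNReal.ofReal (2*C)) u := by
        refine lintegral_mono_ae ?_
        filter_upwards [ae_restrict_mem measurableSet_Ioc] with u hu
        exact key u hu
    _ = ENNReal.ofReal (2*C) * (volume.restrict (Ioc (0:ℝ) T)) bad := by
        rw [lintegral_indicator hbadmeas, setLIntegral_const]
    _ ≤ ENNReal.ofReal (2*C) * volume bad := by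
        gcongr
        exact Measure.restrict_le_self
    _ ≤ ENNReal.ofReal (2*C) * ENNReal.ofReal ((2*(N:ℝ)+5) * ε) := by
        gcongr
        have hTK : T - (K:ℝ)*ε ≤ ε := by
          have h1 : T/ε < (K:ℝ) + 1 := by
            have := Nat.lt_floor_add_one (T/ε)
            exact_mod_cast this
          rw [div_lt_iff₀ hε] at h1
          nlinarith
        calc volume bad ≤ volume (Ioc (0:ℝ) (2*ε) ∪ Ioc ((K:ℝ)*ε) T) +
              volume (⋃ k : Fin (N+1), Ioc (τ k) (τ k + 2*ε)) := measure_union_le _ _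
          _ ≤ (volume (Ioc (0:ℝ) (2*ε)) + volume (Ioc ((K:ℝ)*ε) T)) +
              ∑' k : Fin (N+1), volume (Ioc (τ k) (τ k + 2*ε)) :=
            add_le_add (measure_union_le _ _) (measure_iUnion_le _)
          _ ≤ (ENNReal.ofReal (2*ε) + ENNReal.ofReal ε) +
              ((N:ℝ≥0∞)+1) * ENNReal.ofReal (2*ε) := by
              refine add_le_add (add_le_add ?_ ?_) ?_
              · rw [Real.volume_Ioc]; exact ENNReal.ofReal_le_ofReal (by linarith)
              · rw [Real.volume_Ioc]; exact ENNReal.ofReal_le_ofReal hTK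
              · refine le_of_eq ?_
                calc ∑' k : Fin (N+1), volume (Ioc (τ k) (τ k + 2*ε))
                    = ∑' _k : Fin (N+1), ENNReal.ofReal (2*ε) := by
                      congr 1; funext k; rw [Real.volume_Ioc]; congr 1; ring
                  _ = ((N:ℝ≥0∞)+1) * ENNReal.ofReal (2*ε) := by
                      rw [tsum_fintype]
                      simp [Finset.sum_const, nsmul_eq_mul]
          _ = ENNReal.ofReal ((2*(N:ℝ)+5) * ε) := by
              have hN : ((N:ℝ≥0∞)+1) = ENNReal.ofReal ((N:ℝ)+1) := by
                rw [ENNReal.ofReal_add (by positivity) zero_le_one]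
                simp [ENNReal.ofReal_natCast]
              rw [hN, ← ENNReal.ofReal_mul (by positivity),
                ← ENNReal.ofReal_add (by positivity) (by positivity),
                ← ENNReal.ofReal_add (by positivity) (by positivity)]
              congr 1
              ring
    _ = ENNReal.ofReal (2*C*(2*(N:ℝ)+5) * ε) := by
        rw [← ENNReal.ofReal_mul (by positivity)]
        ring_nf


-- step uncurry measurability
lemma step_uncurry_meas {T : ℝ} {ζ : ℝ → Ω → ℝ} (hζ : IsStepProcess T ζ) :
    Measurable (Function.uncurry ζ) := by
  obtain ⟨N, τ, ξ, h0, hlast, hmono, hmeas, hbdd, hrep⟩ := hζ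
  have : Function.uncurry ζ = fun p : ℝ × Ω =>
      ∑ j, ξ j p.2 * Set.indicator (Set.Ioc (τ j.castSucc) (τ j.succ)) (fun _ => (1:ℝ)) p.1 := by
    funext p; exact hrep p.1 p.2
  rw [this]
  exact Finset.measurable_sum _ fun j _ =>
    ((hmeas j).comp measurable_snd).mul
      ((measurable_const.indicator measurableSet_Ioc).comp measurable_fst)

theorem mov_part (𝔓 : Set (Measure Ω))
    (hprob : ∀ P ∈ 𝔓, IsProbabilityMeasure P)
    (T : ℝ) (hT : 0 < T)
    (η : ℝ → Ω → ℝ) (hη : MemM1 𝔓 T η) :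
    Tendsto (fun ε : ℝ => M1norm 𝔓 T (fun t ω => movAvg ε η t ω - η t ω))
        (nhdsWithin 0 (Set.Ioi 0)) (nhds 0) := by
  rw [ENNReal.tendsto_nhds_zero]
  intro δ hδ
  set δ0 := min δ 1 with hδ0def
  have hδ0 : 0 < δ0 := lt_min hδ zero_lt_one
  have hδ0top : δ0 ≠ ⊤ := ne_top_of_le_ne_top ENNReal.one_ne_top (min_le_right _ _)
  have hhalfpos : 0 < δ0 / 2 := ENNReal.half_pos hδ0.ne'
  have hhalftop : δ0 / 2 ≠ ⊤ := by
    exact (ENNReal.div_lt_top hδ0top (by norm_num)).ne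
  obtain ⟨ζ, hζstep, hζclose⟩ := hη.2.2 (δ0/2/2) (ENNReal.half_pos hhalfpos.ne')
  obtain ⟨c, hc, hstep⟩ := step_mov' hT hζstep
  obtain ⟨C, N, τ, hC, hτ0, hbound, hζsmeas, hconst⟩ := step_data' hζstep
  set r : ℝ := (δ0/2).toReal / (c+1) with hr
  have hrpos : 0 < r := by
    apply div_pos
    · exact ENNReal.toReal_pos hhalfpos.ne' hhalftop
    · linarith
  have hζu : Measurable (Function.uncurry ζ) := step_uncurry_meas hζstep
  have hηmζu : Measurable (Function.uncurry (fun t ω => η t ω - ζ t ω)) := hη.1.sub hζu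
  filter_upwards [Ioc_mem_nhdsGT_of_mem (Set.mem_Ico.mpr ⟨le_refl (0:ℝ), hrpos⟩)] with ε hε
  obtain ⟨hε0, hεr⟩ := hε
  -- the main per-P bound
  have main : M1norm 𝔓 T (fun t ω => movAvg ε η t ω - η t ω)
      ≤ 2 * M1norm 𝔓 T (fun t ω => η t ω - ζ t ω) + ENNReal.ofReal (c * ε) := by
    refine iSup_le fun P => ?_
    haveI := hprob P.1 P.2
    -- a.e. integrability of η slices
    have hbase : Measurable (fun q : Ω × ℝ => ENNReal.ofReal |η q.2 q.1|) :=
      (hη.1.comp (measurable_snd.prodMk measurable_fst)).abs.ennreal_ofReal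
    have hAmeas : Measurable fun ω => ∫⁻ t in Ioc (0:ℝ) T, ENNReal.ofReal |η t ω| :=
      hbase.lintegral_prod_right'
    have hfinP : (∫⁻ ω, (∫⁻ t in Ioc (0:ℝ) T, ENNReal.ofReal |η t ω|) ∂(P:Measure Ω)) ≠ ⊤ := by
      refine ne_top_of_le_ne_top hη.2.1.ne ?_
      exact le_iSup (fun Q : 𝔓 => ∫⁻ ω, (∫⁻ t in Ioc (0:ℝ) T,
        ENNReal.ofReal |η t ω|) ∂(Q : Measure Ω)) P
    have hae : ∀ᵐ ω ∂(P:Measure Ω), IntegrableOn (fun s => η s ω) (Ioc (0:ℝ) T) volume := by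
      filter_upwards [ae_lt_top hAmeas hfinP] with ω hω
      refine ⟨(hη.1.comp (measurable_id.prodMk measurable_const)).aestronglyMeasurable, ?_⟩
      rw [hasFiniteIntegral_iff_norm]
      simpa [Real.norm_eq_abs] using hω
    -- the inner bound a.e.
    have hinner : ∀ᵐ ω ∂(P:Measure Ω),
        (∫⁻ t in Ioc (0:ℝ) T, ENNReal.ofReal |movAvg ε η t ω - η t ω|)
          ≤ 2 * (∫⁻ t in Ioc (0:ℝ) T, ENNReal.ofReal |η t ω - ζ t ω|)
            + ENNReal.ofReal (c * ε) := by
      filter_upwards [hae] with ω hω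
      -- decomposition valid for t ∈ Ioc 0 T
      have hdecomp : ∀ t ∈ Ioc (0:ℝ) T,
          movAvg ε η t ω - η t ω
            = movAvg ε (fun s ω' => η s ω' - ζ s ω') t ω
              + (movAvg ε ζ t ω - ζ t ω) + (ζ t ω - η t ω) := by
        intro t ht
        have hle : max (t-ε) 0 ≤ t := max_le (by linarith [ht.1]) ht.1.le
        have hsub : Ioc (max (t-ε) 0) t ⊆ Ioc (0:ℝ) T :=
          Ioc_subset_Ioc (le_max_right _ _) ht.2
        have hηint : IntervalIntegrable (fun s => η s ω) volume (max (t-ε) 0) t := by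
          rw [intervalIntegrable_iff, uIoc_of_le hle]
          exact hω.mono_set hsub
        have hζint : IntervalIntegrable (fun s => ζ s ω) volume (max (t-ε) 0) t :=
          intervalIntegrable_of_bounded_meas' (hζsmeas ω) (fun s => hbound s ω) _ _
        have : movAvg ε (fun s ω' => η s ω' - ζ s ω') t ω
            = movAvg ε η t ω - movAvg ε ζ t ω := by
          rw [movAvg, movAvg, movAvg, intervalIntegral.integral_sub hηint hζint]
          ring
        rw [this]
        ring
      -- measurability in t at fixed ω
      have hf1 : Measurable fun t => ENNReal.ofReal
          |movAvg ε (fun s ω' => η s ω' - ζ s ω') t ω| := by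
        have := measurable_uncurry_movAvg' hηmζu ε
        exact ((this.comp (measurable_id.prodMk measurable_const)).abs).ennreal_ofReal
      have hf2 : Measurable fun t => ENNReal.ofReal |movAvg ε ζ t ω - ζ t ω| := by
        have h1 := measurable_uncurry_movAvg' hζu ε
        have h2 : Measurable fun t => ζ t ω := hζu.comp (measurable_id.prodMk measurable_const)
        exact (((h1.comp (measurable_id.prodMk measurable_const)).sub h2).abs).ennreal_ofReal
      calc ∫⁻ t in Ioc (0:ℝ) T, ENNReal.ofReal |movAvg ε η t ω - η t ω|
          ≤ ∫⁻ t in Ioc (0:ℝ) T,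
              (ENNReal.ofReal |movAvg ε (fun s ω' => η s ω' - ζ s ω') t ω|
                + ENNReal.ofReal |movAvg ε ζ t ω - ζ t ω|
                + ENNReal.ofReal |ζ t ω - η t ω|) := by
            refine lintegral_mono_ae ?_
            filter_upwards [ae_restrict_mem measurableSet_Ioc] with t ht
            rw [hdecomp t ht]
            calc ENNReal.ofReal |_ + _ + _|
                ≤ ENNReal.ofReal (|movAvg ε (fun s ω' => η s ω' - ζ s ω') t ω|
                  + |movAvg ε ζ t ω - ζ t ω| + |ζ t ω - η t ω|) := by
                  refine ENNReal.ofReal_le_ofReal ?_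
                  exact (abs_add_le _ _).trans (add_le_add_left (abs_add_le _ _) _)
              _ = _ := by
                  rw [ENNReal.ofReal_add (by positivity) (abs_nonneg _),
                    ENNReal.ofReal_add (by positivity) (abs_nonneg _)]
        _ = (∫⁻ t in Ioc (0:ℝ) T, ENNReal.ofReal
              |movAvg ε (fun s ω' => η s ω' - ζ s ω') t ω|)
            + (∫⁻ t in Ioc (0:ℝ) T, ENNReal.ofReal |movAvg ε ζ t ω - ζ t ω|)
            + (∫⁻ t in Ioc (0:ℝ) T, ENNReal.ofReal |ζ t ω - η t ω|) := by
            rw [lintegral_add_left (f := fun t => ENNReal.ofReal |movAvg ε (fun s ω' => η s ω' - ζ s ω') t ω| + ENNReal.ofReal |movAvg ε ζ t ω - ζ t ω|) (hf1.add hf2), lintegral_add_left hf1]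
        _ ≤ (∫⁻ s in Ioc (0:ℝ) T, ENNReal.ofReal |η s ω - ζ s ω|)
            + ENNReal.ofReal (c * ε)
            + (∫⁻ t in Ioc (0:ℝ) T, ENNReal.ofReal |η t ω - ζ t ω|) := by
            refine add_le_add (add_le_add ?_ ?_) ?_
            · exact lintegral_movAvg_le' hε0 ((hη.1.comp (measurable_id.prodMk measurable_const)).sub
                (hζu.comp (measurable_id.prodMk measurable_const)))
            · exact hstep ε hε0 ω
            · refine le_of_eq (lintegral_congr fun t => ?_)
              rw [abs_sub_comm]
        _ = 2 * (∫⁻ t in Ioc (0:ℝ) T, ENNReal.ofReal |η t ω - ζ t ω|)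
            + ENNReal.ofReal (c * ε) := by
            ring
    -- integrate over ω
    have hbase2 : Measurable (fun q : Ω × ℝ => ENNReal.ofReal |η q.2 q.1 - ζ q.2 q.1|) :=
      ((hη.1.comp (measurable_snd.prodMk measurable_fst)).sub
        (hζu.comp (measurable_snd.prodMk measurable_fst))).abs.ennreal_ofReal
    have hAmζ : Measurable fun ω => ∫⁻ t in Ioc (0:ℝ) T, ENNReal.ofReal |η t ω - ζ t ω| :=
      hbase2.lintegral_prod_right'
    calc ∫⁻ ω, (∫⁻ t in Ioc (0:ℝ) T, ENNReal.ofReal |movAvg ε η t ω - η t ω|) ∂(P:Measure Ω)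
        ≤ ∫⁻ ω, (2 * (∫⁻ t in Ioc (0:ℝ) T, ENNReal.ofReal |η t ω - ζ t ω|)
            + ENNReal.ofReal (c * ε)) ∂(P:Measure Ω) := lintegral_mono_ae hinner
      _ = 2 * (∫⁻ ω, (∫⁻ t in Ioc (0:ℝ) T, ENNReal.ofReal |η t ω - ζ t ω|) ∂(P:Measure Ω))
          + ENNReal.ofReal (c * ε) := by
          rw [lintegral_add_right _ measurable_const, lintegral_const_mul' _ _ (by norm_num),
            lintegral_const, measure_univ, mul_one]
      _ ≤ 2 * M1norm 𝔓 T (fun t ω => η t ω - ζ t ω) + ENNReal.ofReal (c * ε) := by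
          gcongr
          exact le_iSup (fun Q : 𝔓 => ∫⁻ ω, (∫⁻ t in Ioc (0:ℝ) T,
            ENNReal.ofReal |η t ω - ζ t ω|) ∂(Q : Measure Ω)) P
  -- conclude
  refine main.trans ?_
  have h1 : 2 * M1norm 𝔓 T (fun t ω => η t ω - ζ t ω) ≤ δ0/2 := by
    calc 2 * M1norm 𝔓 T (fun t ω => η t ω - ζ t ω) ≤ 2 * (δ0/2/2) :=
          mul_le_mul_right hζclose.le 2
      _ ≤ δ0/2 := ENNReal.mul_div_le
  have h2 : ENNReal.ofReal (c * ε) ≤ δ0/2 := by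
    have hcε : c * ε ≤ (δ0/2).toReal := by
      calc c * ε ≤ c * r := by nlinarith
        _ = (c/(c+1)) * (δ0/2).toReal := by rw [hr]; ring
        _ ≤ 1 * (δ0/2).toReal := by
            refine mul_le_mul_of_nonneg_right ?_ ENNReal.toReal_nonneg
            rw [div_le_one (by linarith)]; linarith
        _ = (δ0/2).toReal := one_mul _
    calc ENNReal.ofReal (c * ε) ≤ ENNReal.ofReal ((δ0/2).toReal) :=
          ENNReal.ofReal_le_ofReal hcε
      _ = δ0/2 := ENNReal.ofReal_toReal hhalftop
  calc 2 * M1norm 𝔓 T (fun t ω => η t ω - ζ t ω) + ENNReal.ofReal (c * ε)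
      ≤ δ0/2 + δ0/2 := add_le_add h1 h2
    _ = δ0 := ENNReal.add_halves _
    _ ≤ δ := min_le_left _ _


theorem block_part (𝔓 : Set (Measure Ω))
    (hprob : ∀ P ∈ 𝔓, IsProbabilityMeasure P)
    (T : ℝ) (hT : 0 < T)
    (η : ℝ → Ω → ℝ) (hη : MemM1 𝔓 T η) :
    Tendsto (fun ε : ℝ => M1norm 𝔓 T (fun t ω => blockAvg T ε η t ω - η t ω))
        (nhdsWithin 0 (Set.Ioi 0)) (nhds 0) := by
  rw [ENNReal.tendsto_nhds_zero]
  intro δ hδ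
  set δ0 := min δ 1 with hδ0def
  have hδ0 : 0 < δ0 := lt_min hδ zero_lt_one
  have hδ0top : δ0 ≠ ⊤ := ne_top_of_le_ne_top ENNReal.one_ne_top (min_le_right _ _)
  have hhalfpos : 0 < δ0 / 2 := ENNReal.half_pos hδ0.ne'
  have hhalftop : δ0 / 2 ≠ ⊤ := by
    exact (ENNReal.div_lt_top hδ0top (by norm_num)).ne
  obtain ⟨ζ, hζstep, hζclose⟩ := hη.2.2 (δ0/2/2) (ENNReal.half_pos hhalfpos.ne')
  obtain ⟨c, hc, hstep⟩ := step_block' hT hζstep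
  obtain ⟨C, N, τ, hC, hτ0, hbound, hζsmeas, hconst⟩ := step_data' hζstep
  set r : ℝ := (δ0/2).toReal / (c+1) with hr
  have hrpos : 0 < r := by
    apply div_pos
    · exact ENNReal.toReal_pos hhalfpos.ne' hhalftop
    · linarith
  have hζu : Measurable (Function.uncurry ζ) := step_uncurry_meas hζstep
  have hηmζu : Measurable (Function.uncurry (fun t ω => η t ω - ζ t ω)) := hη.1.sub hζu
  filter_upwards [Ioc_mem_nhdsGT_of_mem (Set.mem_Ico.mpr ⟨le_refl (0:ℝ), hrpos⟩)] with ε hε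
  obtain ⟨hε0, hεr⟩ := hε
  have main : M1norm 𝔓 T (fun t ω => blockAvg T ε η t ω - η t ω)
      ≤ 2 * M1norm 𝔓 T (fun t ω => η t ω - ζ t ω) + ENNReal.ofReal (c * ε) := by
    refine iSup_le fun P => ?_
    haveI := hprob P.1 P.2
    have hbase : Measurable (fun q : Ω × ℝ => ENNReal.ofReal |η q.2 q.1|) :=
      (hη.1.comp (measurable_snd.prodMk measurable_fst)).abs.ennreal_ofReal
    have hAmeas : Measurable fun ω => ∫⁻ t in Ioc (0:ℝ) T, ENNReal.ofReal |η t ω| :=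
      hbase.lintegral_prod_right'
    have hfinP : (∫⁻ ω, (∫⁻ t in Ioc (0:ℝ) T, ENNReal.ofReal |η t ω|) ∂(P:Measure Ω)) ≠ ⊤ := by
      refine ne_top_of_le_ne_top hη.2.1.ne ?_
      exact le_iSup (fun Q : 𝔓 => ∫⁻ ω, (∫⁻ t in Ioc (0:ℝ) T,
        ENNReal.ofReal |η t ω|) ∂(Q : Measure Ω)) P
    have hae : ∀ᵐ ω ∂(P:Measure Ω), IntegrableOn (fun s => η s ω) (Ioc (0:ℝ) T) volume := by
      filter_upwards [ae_lt_top hAmeas hfinP] with ω hω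
      refine ⟨(hη.1.comp (measurable_id.prodMk measurable_const)).aestronglyMeasurable, ?_⟩
      rw [hasFiniteIntegral_iff_norm]
      simpa [Real.norm_eq_abs] using hω
    have hinner : ∀ᵐ ω ∂(P:Measure Ω),
        (∫⁻ t in Ioc (0:ℝ) T, ENNReal.ofReal |blockAvg T ε η t ω - η t ω|)
          ≤ 2 * (∫⁻ t in Ioc (0:ℝ) T, ENNReal.ofReal |η t ω - ζ t ω|)
            + ENNReal.ofReal (c * ε) := by
      filter_upwards [hae] with ω hω
      have hdecomp : ∀ t,
          blockAvg T ε η t ω - η t ω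
            = blockAvg T ε (fun s ω' => η s ω' - ζ s ω') t ω
              + (blockAvg T ε ζ t ω - ζ t ω) + (ζ t ω - η t ω) := by
        intro t
        have hlin : blockAvg T ε (fun s ω' => η s ω' - ζ s ω') t ω
            = blockAvg T ε η t ω - blockAvg T ε ζ t ω := by
          rw [blockAvg, blockAvg, blockAvg, ← Finset.sum_sub_distrib]
          refine Finset.sum_congr rfl fun k hk => ?_
          obtain ⟨hk1, hk2⟩ := Finset.mem_Ico.mp hk
          have hk1r : (1:ℝ) ≤ (k:ℝ) := by exact_mod_cast hk1
          have h1le : (0:ℝ) ≤ ((k:ℝ)-1)*ε := by nlinarith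
          have hab : ((k:ℝ)-1)*ε ≤ (k:ℝ)*ε := by nlinarith
          have hkT : (k:ℝ)*ε ≤ T := by
            have hkK : (k:ℝ) ≤ ((Nat.floor (T/ε) : ℕ):ℝ) := by exact_mod_cast hk2.le
            have hKT : ((Nat.floor (T/ε) : ℕ):ℝ) ≤ T/ε := Nat.floor_le (div_nonneg hT.le hε0.le)
            have : (k:ℝ) ≤ T/ε := hkK.trans hKT
            calc (k:ℝ)*ε ≤ (T/ε)*ε := by nlinarith
              _ = T := div_mul_cancel₀ _ hε0.ne'
          have hsub : Ioc (((k:ℝ)-1)*ε) ((k:ℝ)*ε) ⊆ Ioc (0:ℝ) T := Ioc_subset_Ioc h1le hkT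
          have hηint : IntervalIntegrable (fun s => η s ω) volume (((k:ℝ)-1)*ε) ((k:ℝ)*ε) := by
            rw [intervalIntegrable_iff, uIoc_of_le hab]
            exact hω.mono_set hsub
          have hζint := intervalIntegrable_of_bounded_meas' (hζsmeas ω)
            (fun s => hbound s ω) (((k:ℝ)-1)*ε) ((k:ℝ)*ε)
          rw [intervalIntegral.integral_sub hηint hζint]
          ring
        rw [hlin]; ring
      have hf1 : Measurable fun t => ENNReal.ofReal
          |blockAvg T ε (fun s ω' => η s ω' - ζ s ω') t ω| := by
        have h0 := measurable_uncurry_blockAvg' hηmζu T ε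
        exact ((h0.comp (measurable_id.prodMk measurable_const)).abs).ennreal_ofReal
      have hf2 : Measurable fun t => ENNReal.ofReal |blockAvg T ε ζ t ω - ζ t ω| := by
        have h1 := measurable_uncurry_blockAvg' hζu T ε
        have h2 : Measurable fun t => ζ t ω := hζu.comp (measurable_id.prodMk measurable_const)
        exact (((h1.comp (measurable_id.prodMk measurable_const)).sub h2).abs).ennreal_ofReal
      calc ∫⁻ t in Ioc (0:ℝ) T, ENNReal.ofReal |blockAvg T ε η t ω - η t ω|
          ≤ ∫⁻ t in Ioc (0:ℝ) T,
              (ENNReal.ofReal |blockAvg T ε (fun s ω' => η s ω' - ζ s ω') t ω|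
                + ENNReal.ofReal |blockAvg T ε ζ t ω - ζ t ω|
                + ENNReal.ofReal |ζ t ω - η t ω|) := by
            refine lintegral_mono fun t => ?_
            rw [hdecomp t]
            calc ENNReal.ofReal |_ + _ + _|
                ≤ ENNReal.ofReal (|blockAvg T ε (fun s ω' => η s ω' - ζ s ω') t ω|
                  + |blockAvg T ε ζ t ω - ζ t ω| + |ζ t ω - η t ω|) := by
                  refine ENNReal.ofReal_le_ofReal ?_
                  exact (abs_add_le _ _).trans (add_le_add_left (abs_add_le _ _) _)
              _ = _ := by
                  rw [ENNReal.ofReal_add (by positivity) (abs_nonneg _),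
                    ENNReal.ofReal_add (by positivity) (abs_nonneg _)]
        _ = (∫⁻ t in Ioc (0:ℝ) T, ENNReal.ofReal
              |blockAvg T ε (fun s ω' => η s ω' - ζ s ω') t ω|)
            + (∫⁻ t in Ioc (0:ℝ) T, ENNReal.ofReal |blockAvg T ε ζ t ω - ζ t ω|)
            + (∫⁻ t in Ioc (0:ℝ) T, ENNReal.ofReal |ζ t ω - η t ω|) := by
            rw [lintegral_add_left (f := fun t => ENNReal.ofReal |blockAvg T ε (fun s ω' => η s ω' - ζ s ω') t ω| + ENNReal.ofReal |blockAvg T ε ζ t ω - ζ t ω|) (hf1.add hf2), lintegral_add_left hf1]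
        _ ≤ (∫⁻ s in Ioc (0:ℝ) T, ENNReal.ofReal |η s ω - ζ s ω|)
            + ENNReal.ofReal (c * ε)
            + (∫⁻ t in Ioc (0:ℝ) T, ENNReal.ofReal |η t ω - ζ t ω|) := by
            refine add_le_add (add_le_add ?_ ?_) ?_
            · exact lintegral_blockAvg_le' hT hε0
                ((hη.1.comp (measurable_id.prodMk measurable_const)).sub
                  (hζu.comp (measurable_id.prodMk measurable_const)))
            · exact hstep ε hε0 ω
            · refine le_of_eq (lintegral_congr fun t => ?_)
              rw [abs_sub_comm]
        _ = 2 * (∫⁻ t in Ioc (0:ℝ) T, ENNReal.ofReal |η t ω - ζ t ω|)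
            + ENNReal.ofReal (c * ε) := by
            ring
    have hbase2 : Measurable (fun q : Ω × ℝ => ENNReal.ofReal |η q.2 q.1 - ζ q.2 q.1|) :=
      ((hη.1.comp (measurable_snd.prodMk measurable_fst)).sub
        (hζu.comp (measurable_snd.prodMk measurable_fst))).abs.ennreal_ofReal
    have hAmζ : Measurable fun ω => ∫⁻ t in Ioc (0:ℝ) T, ENNReal.ofReal |η t ω - ζ t ω| :=
      hbase2.lintegral_prod_right'
    calc ∫⁻ ω, (∫⁻ t in Ioc (0:ℝ) T, ENNReal.ofReal |blockAvg T ε η t ω - η t ω|) ∂(P:Measure Ω)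
        ≤ ∫⁻ ω, (2 * (∫⁻ t in Ioc (0:ℝ) T, ENNReal.ofReal |η t ω - ζ t ω|)
            + ENNReal.ofReal (c * ε)) ∂(P:Measure Ω) := lintegral_mono_ae hinner
      _ = 2 * (∫⁻ ω, (∫⁻ t in Ioc (0:ℝ) T, ENNReal.ofReal |η t ω - ζ t ω|) ∂(P:Measure Ω))
          + ENNReal.ofReal (c * ε) := by
          rw [lintegral_add_right _ measurable_const, lintegral_const_mul' _ _ (by norm_num),
            lintegral_const, measure_univ, mul_one]
      _ ≤ 2 * M1norm 𝔓 T (fun t ω => η t ω - ζ t ω) + ENNReal.ofReal (c * ε) := by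
          gcongr
          exact le_iSup (fun Q : 𝔓 => ∫⁻ ω, (∫⁻ t in Ioc (0:ℝ) T,
            ENNReal.ofReal |η t ω - ζ t ω|) ∂(Q : Measure Ω)) P
  refine main.trans ?_
  have h1 : 2 * M1norm 𝔓 T (fun t ω => η t ω - ζ t ω) ≤ δ0/2 := by
    calc 2 * M1norm 𝔓 T (fun t ω => η t ω - ζ t ω) ≤ 2 * (δ0/2/2) :=
          mul_le_mul_right hζclose.le 2
      _ ≤ δ0/2 := ENNReal.mul_div_le
  have h2 : ENNReal.ofReal (c * ε) ≤ δ0/2 := by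
    have hcε : c * ε ≤ (δ0/2).toReal := by
      calc c * ε ≤ c * r := by nlinarith
        _ = (c/(c+1)) * (δ0/2).toReal := by rw [hr]; ring
        _ ≤ 1 * (δ0/2).toReal := by
            refine mul_le_mul_of_nonneg_right ?_ ENNReal.toReal_nonneg
            rw [div_le_one (by linarith)]; linarith
        _ = (δ0/2).toReal := one_mul _
    calc ENNReal.ofReal (c * ε) ≤ ENNReal.ofReal ((δ0/2).toReal) :=
          ENNReal.ofReal_le_ofReal hcε
      _ = δ0/2 := ENNReal.ofReal_toReal hhalftop
  calc 2 * M1norm 𝔓 T (fun t ω => η t ω - ζ t ω) + ENNReal.ofReal (c * ε)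
      ≤ δ0/2 + δ0/2 := add_le_add h1 h2
    _ = δ0 := ENNReal.add_halves _
    _ ≤ δ := min_le_left _ _

end AuxStmt4

/-- for every `η ∈ M¹(𝔓)`, both `‖η^ε − η‖_{M¹} → 0` and
`‖η^{ε,0} − η‖_{M¹} → 0` as `ε → 0⁺`. -/
theorem stmt4 (𝔓 : Set (Measure Ω)) (h𝔓 : 𝔓.Nonempty)
    (hprob : ∀ P ∈ 𝔓, IsProbabilityMeasure P)
    (T : ℝ) (hT : 0 < T)
    (η : ℝ → Ω → ℝ) (hη : MemM1 𝔓 T η) :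
    Tendsto (fun ε : ℝ => M1norm 𝔓 T (fun t ω => movAvg ε η t ω - η t ω))
        (nhdsWithin 0 (Set.Ioi 0)) (nhds 0) ∧
    Tendsto (fun ε : ℝ => M1norm 𝔓 T (fun t ω => blockAvg T ε η t ω - η t ω))
        (nhdsWithin 0 (Set.Ioi 0)) (nhds 0) := by
  exact ⟨mov_part 𝔓 hprob T hT η hη, block_part 𝔓 hprob T hT η hη⟩
end
end

section
/- For n ∈ ℕ define δ_n(s) := Σ_{i=0}^{n−1} (−1)^i 1_{(iT/n, (i+1)T/n]}(s) for s ∈ [0,T]. Then for every h ∈ M¹(𝒫), Ê(∫₀ᵀ δ_n(s) h_s ds) → 0 as n → ∞. -/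
open MeasureTheory Filter
open scoped ENNReal

noncomputable section

variable {Ω : Type*} [MeasurableSpace Ω]

/-- The alternating-sign function `δ_n(s) = Σ_{i=0}^{n−1} (−1)^i 1_{(iT/n,(i+1)T/n]}(s)`. -/
def deltaFun (T : ℝ) (n : ℕ) (s : ℝ) : ℝ :=
  ∑ i ∈ Finset.range n,
    (-1 : ℝ) ^ i *
      Set.indicator (Set.Ioc ((i : ℝ) * T / n) (((i : ℝ) + 1) * T / n)) (fun _ => (1:ℝ)) s

lemma vol_inter (c1 c2 a b : ℝ) (h12 : c1 ≤ c2) (hab : a ≤ b) :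
    (volume (Set.Ioc c1 c2 ∩ Set.Ioc a b)).toReal
      = (min b c2 - min b c1) - (min a c2 - min a c1) := by
  rw [Set.Ioc_inter_Ioc, Real.volume_Ioc, ENNReal.toReal_ofReal']
  rcases le_total a c1 with h1 | h1 <;> rcases le_total b c2 with h2 | h2 <;>
    rcases le_total b c1 with h3 | h3 <;> rcases le_total a c2 with h4 | h4 <;>
    simp [min_def, max_def] <;> split_ifs <;> linarith

lemma S_bounds (c : ℝ) (hc : 0 ≤ c) (n : ℕ) (x : ℝ) (hx : 0 ≤ x) :
    0 ≤ (∑ i ∈ Finset.range n, (-1:ℝ)^i * (min x (((i:ℝ)+1)*c) - min x ((i:ℝ)*c))) ∧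
    (∑ i ∈ Finset.range n, (-1:ℝ)^i * (min x (((i:ℝ)+1)*c) - min x ((i:ℝ)*c))) ≤ c ∧
    ((n:ℝ)*c ≤ x →
      (∑ i ∈ Finset.range n, (-1:ℝ)^i * (min x (((i:ℝ)+1)*c) - min x ((i:ℝ)*c)))
        = if Even n then 0 else c) := by
  rcases eq_or_lt_of_le hc with hc0 | hc0
  · have : ∀ i : ℕ, min x (((i:ℝ)+1)*c) - min x ((i:ℝ)*c) = 0 := by
      intro i
      rw [← hc0]
      simp [min_eq_right hx]
    simp only [this, mul_zero, Finset.sum_const_zero]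
    refine ⟨le_refl _, hc, fun _ => ?_⟩
    rw [← hc0]; split_ifs <;> rfl
  · induction n with
    | zero => simp [hc]
    | succ n ih =>
      obtain ⟨ih0, ih1, ih2⟩ := ih
      rw [Finset.sum_range_succ]
      have hnc : (0:ℝ) ≤ (n:ℝ)*c := by positivity
      have hsucc : ((n:ℝ)+1)*c = (n:ℝ)*c + c := by ring
      rcases le_total x ((n:ℝ)*c) with hxn | hxn
      · have hd : min x (((n:ℝ)+1)*c) - min x ((n:ℝ)*c) = 0 := by
          rw [min_eq_left hxn, min_eq_left (by linarith)]
          ring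
        rw [hd, mul_zero, add_zero]
        refine ⟨ih0, ih1, fun hle => ?_⟩
        exfalso
        push_cast at hle
        nlinarith
      · have hSn := ih2 hxn
        have hd0 : 0 ≤ min x (((n:ℝ)+1)*c) - min x ((n:ℝ)*c) := by
          rw [min_eq_right hxn]
          exact sub_nonneg.2 (le_min (by linarith) (by nlinarith))
        have hdc : min x (((n:ℝ)+1)*c) - min x ((n:ℝ)*c) ≤ c := by
          rw [min_eq_right hxn]
          have : min x (((n:ℝ)+1)*c) ≤ ((n:ℝ)+1)*c := min_le_right _ _
          linarith
        rcases Nat.even_or_odd n with he | ho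
        · rw [hSn, if_pos he, he.neg_one_pow, one_mul, zero_add]
          refine ⟨hd0, hdc, fun hle => ?_⟩
          push_cast at hle
          rw [min_eq_right hxn, min_eq_right (by linarith), if_neg (Nat.even_add_one.not.2 (by simpa using he))]
          linarith
        · rw [hSn, if_neg (Nat.not_even_iff_odd.2 ho), ho.neg_one_pow, neg_one_mul]
          refine ⟨by linarith, by linarith, fun hle => ?_⟩
          push_cast at hle
          rw [min_eq_right hxn, min_eq_right (by linarith),
            if_pos (Nat.even_add_one.2 (Nat.not_even_iff_odd.2 ho))]
          linarith

lemma deltaFun_measurable (T : ℝ) (n : ℕ) : Measurable (deltaFun T n) := by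
  unfold deltaFun
  exact Finset.measurable_sum _ fun i _ =>
    (measurable_const.indicator measurableSet_Ioc).const_mul _

lemma deltaFun_abs_le (T : ℝ) (n : ℕ) (s : ℝ) : |deltaFun T n s| ≤ 1 := by
  unfold deltaFun
  set I : ℕ → Set ℝ := fun i => Set.Ioc ((i : ℝ) * T / n) (((i : ℝ) + 1) * T / n) with hI
  by_cases hex : ∃ k ∈ Finset.range n, s ∈ I k
  · obtain ⟨k, hk, hsk⟩ := hex
    rw [Finset.sum_eq_single_of_mem k hk]
    · rw [Set.indicator_of_mem hsk]
      simp [abs_mul, abs_pow]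
    · intro j hj hne
      rw [Set.indicator_of_notMem, mul_zero]
      intro hsj
      have hTn : 0 < T / n := by
        have := lt_of_lt_of_le hsk.1 hsk.2
        rw [mul_div_assoc, mul_div_assoc] at this
        nlinarith
      rcases lt_or_gt_of_ne hne with hlt | hlt
      · have h1 : s ≤ ((j:ℝ)+1) * T / n := hsj.2
        have h2 : ((k:ℝ)) * T / n < s := hsk.1
        have hjk : ((j:ℝ)+1) ≤ (k:ℝ) := by exact_mod_cast hlt
        have : ((j:ℝ)+1) * T / n ≤ (k:ℝ) * T / n := by
          rw [mul_div_assoc, mul_div_assoc]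
          exact mul_le_mul_of_nonneg_right hjk hTn.le
        linarith
      · have h1 : s ≤ ((k:ℝ)+1) * T / n := hsk.2
        have h2 : ((j:ℝ)) * T / n < s := hsj.1
        have hjk : ((k:ℝ)+1) ≤ (j:ℝ) := by exact_mod_cast hlt
        have : ((k:ℝ)+1) * T / n ≤ (j:ℝ) * T / n := by
          rw [mul_div_assoc, mul_div_assoc]
          exact mul_le_mul_of_nonneg_right hjk hTn.le
        linarith
  · push_neg at hex
    rw [Finset.sum_eq_zero]
    · simp
    · intro j hj
      rw [Set.indicator_of_notMem (hex j hj), mul_zero]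

lemma integrableOn_bdd {g : ℝ → ℝ} (hg : Measurable g) {C : ℝ} (hC : ∀ s, |g s| ≤ C)
    (u v : ℝ) : IntegrableOn g (Set.Ioc u v) volume := by
  refine Integrable.mono' (integrableOn_const (ne_of_lt ?_)) hg.aestronglyMeasurable
    (ae_of_all _ fun s => by simpa using hC s)
  rw [Real.volume_Ioc]
  exact ENNReal.ofReal_lt_top

lemma integral_delta_indicator (T : ℝ) (hT : 0 < T) (n : ℕ) (hn : 1 ≤ n) (a b : ℝ)
    (h0a : 0 ≤ a) (hab : a ≤ b) (hbT : b ≤ T) :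
    |∫ s in Set.Ioc (0:ℝ) T,
        deltaFun T n s * Set.indicator (Set.Ioc a b) (fun _ => (1:ℝ)) s| ≤ T / n := by
  have hn0 : (0:ℝ) < n := by exact_mod_cast hn
  have hc : 0 < T / n := div_pos hT hn0
  set J := Set.Ioc a b with hJ
  set I : ℕ → Set ℝ := fun i => Set.Ioc ((i:ℝ)*T/n) (((i:ℝ)+1)*T/n) with hI
  have hIsub : ∀ i, i ∈ Finset.range n → I i ⊆ Set.Ioc (0:ℝ) T := by
    intro i hi
    apply Set.Ioc_subset_Ioc
    · positivity
    · rw [mul_div_assoc]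
      have : ((i:ℝ)+1) ≤ (n:ℝ) := by
        exact_mod_cast Finset.mem_range.1 hi
      calc ((i:ℝ)+1) * (T/n) ≤ (n:ℝ) * (T/n) := by nlinarith [hc.le]
        _ = T := by field_simp
  have hfun : ∀ s, deltaFun T n s * J.indicator (fun _ => (1:ℝ)) s
      = ∑ i ∈ Finset.range n, (-1:ℝ)^i * (I i ∩ J).indicator (fun _ => (1:ℝ)) s := by
    intro s
    rw [deltaFun, Finset.sum_mul]
    refine Finset.sum_congr rfl fun i _ => ?_
    simp only [hI, Set.indicator_apply, Set.mem_inter_iff, Set.mem_Ioc]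
    split_ifs <;> simp only [mul_one, mul_zero] <;> tauto
  have hint : ∀ i ∈ Finset.range n, Integrable
      (fun s => (-1:ℝ)^i * (I i ∩ J).indicator (fun _ => (1:ℝ)) s)
      (volume.restrict (Set.Ioc (0:ℝ) T)) := by
    intro i _
    refine Integrable.const_mul ?_ _
    rw [integrable_indicator_iff (measurableSet_Ioc.inter measurableSet_Ioc)]
    refine integrableOn_const (ne_of_lt ?_)
    rw [Measure.restrict_apply (measurableSet_Ioc.inter measurableSet_Ioc)]
    refine lt_of_le_of_lt (measure_mono Set.inter_subset_right) ?_
    rw [Real.volume_Ioc]; exact ENNReal.ofReal_lt_top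
  have hkey : (∫ s in Set.Ioc (0:ℝ) T,
        deltaFun T n s * J.indicator (fun _ => (1:ℝ)) s)
      = ∑ i ∈ Finset.range n, (-1:ℝ)^i * (volume (I i ∩ J)).toReal := by
    simp_rw [hfun]
    rw [integral_finset_sum _ hint]
    refine Finset.sum_congr rfl fun i hi => ?_
    rw [integral_const_mul, integral_indicator_const (1:ℝ) (measurableSet_Ioc.inter measurableSet_Ioc),
      smul_eq_mul, mul_one, measureReal_def, Measure.restrict_apply (measurableSet_Ioc.inter measurableSet_Ioc)]
    congr 2
    rw [Set.inter_eq_left.2]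
    exact le_trans Set.inter_subset_left (hIsub i hi)
  rw [hkey]
  have hvol : ∀ i, (volume (I i ∩ J)).toReal
      = ((min b (((i:ℝ)+1)*(T/n)) - min b ((i:ℝ)*(T/n)))
        - (min a (((i:ℝ)+1)*(T/n)) - min a ((i:ℝ)*(T/n)))) := by
    intro i
    rw [hI, hJ]
    simp only [mul_div_assoc]
    exact vol_inter _ _ _ _ (by nlinarith [hc.le]) hab
  simp_rw [hvol]
  have hsplit : ∑ i ∈ Finset.range n, (-1:ℝ)^i *
        ((min b (((i:ℝ)+1)*(T/n)) - min b ((i:ℝ)*(T/n)))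
          - (min a (((i:ℝ)+1)*(T/n)) - min a ((i:ℝ)*(T/n))))
      = (∑ i ∈ Finset.range n, (-1:ℝ)^i * (min b (((i:ℝ)+1)*(T/n)) - min b ((i:ℝ)*(T/n))))
        - ∑ i ∈ Finset.range n, (-1:ℝ)^i * (min a (((i:ℝ)+1)*(T/n)) - min a ((i:ℝ)*(T/n))) := by
    rw [← Finset.sum_sub_distrib]
    exact Finset.sum_congr rfl fun i _ => by ring
  rw [hsplit]
  obtain ⟨hb0, hb1, -⟩ := S_bounds (T/n) hc.le n b (le_trans h0a hab)
  obtain ⟨ha0, ha1, -⟩ := S_bounds (T/n) hc.le n a h0a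
  rw [abs_le]
  constructor <;> [linarith; linarith]

lemma abs_indicator_one_le (A : Set ℝ) (s : ℝ) :
    |Set.indicator A (fun _ => (1:ℝ)) s| ≤ 1 := by
  classical
  rw [Set.indicator_apply]
  split_ifs <;> simp

lemma step_bound (T : ℝ) (hT : 0 < T) {ζ : ℝ → Ω → ℝ} (hζ : IsStepProcess T ζ) :
    ∃ K : ℝ, 0 ≤ K ∧ ∀ n : ℕ, 1 ≤ n → ∀ ω,
      |∫ s in Set.Ioc (0:ℝ) T, deltaFun T n s * ζ s ω| ≤ K / n := by
  obtain ⟨N, t, ξ, ht0, htlast, hmono, hmeas, hbdd, hrep⟩ := hζ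
  choose C hC using hbdd
  refine ⟨(∑ j, max (C j) 0) * T, mul_nonneg (Finset.sum_nonneg fun j _ => le_max_right _ _) hT.le, ?_⟩
  intro n hn ω
  have hn0 : (0:ℝ) < n := by exact_mod_cast hn
  have hrw : ∀ s, deltaFun T n s * ζ s ω
      = ∑ j, ξ j ω * (deltaFun T n s *
          Set.indicator (Set.Ioc (t j.castSucc) (t j.succ)) (fun _ => (1:ℝ)) s) := by
    intro s
    rw [hrep s ω, Finset.mul_sum]
    exact Finset.sum_congr rfl fun j _ => by ring
  have hintj : ∀ j : Fin N, IntegrableOn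
      (fun s => deltaFun T n s *
        Set.indicator (Set.Ioc (t j.castSucc) (t j.succ)) (fun _ => (1:ℝ)) s)
      (Set.Ioc (0:ℝ) T) volume := by
    intro j
    refine integrableOn_bdd ((deltaFun_measurable T n).mul
      (measurable_const.indicator measurableSet_Ioc)) (C := 1) (fun s => ?_) 0 T
    rw [Pi.mul_apply, abs_mul]
    calc |deltaFun T n s| * |Set.indicator _ (fun _ => (1:ℝ)) s|
        ≤ 1 * 1 := mul_le_mul (deltaFun_abs_le T n s) (abs_indicator_one_le _ s)
          (abs_nonneg _) zero_le_one
      _ = 1 := mul_one 1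
  have h0j : ∀ j : Fin N, 0 ≤ t j.castSucc := fun j =>
    ht0 ▸ hmono.monotone (Fin.zero_le _)
  have hjj : ∀ j : Fin N, t j.castSucc ≤ t j.succ := fun j =>
    (hmono (Fin.castSucc_lt_succ : j.castSucc < j.succ)).le
  have hjT : ∀ j : Fin N, t j.succ ≤ T := fun j =>
    htlast ▸ hmono.monotone (Fin.le_last _)
  calc |∫ s in Set.Ioc (0:ℝ) T, deltaFun T n s * ζ s ω|
      = |∑ j, ξ j ω * ∫ s in Set.Ioc (0:ℝ) T, deltaFun T n s *
          Set.indicator (Set.Ioc (t j.castSucc) (t j.succ)) (fun _ => (1:ℝ)) s| := by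
        rw [show (∫ s in Set.Ioc (0:ℝ) T, deltaFun T n s * ζ s ω)
            = ∫ s in Set.Ioc (0:ℝ) T, ∑ j, ξ j ω * (deltaFun T n s *
              Set.indicator (Set.Ioc (t j.castSucc) (t j.succ)) (fun _ => (1:ℝ)) s) from
          integral_congr_ae (ae_of_all _ hrw)]
        rw [integral_finset_sum _ fun j _ => (hintj j).const_mul _]
        simp_rw [integral_const_mul]
    _ ≤ ∑ j, |ξ j ω * ∫ s in Set.Ioc (0:ℝ) T, deltaFun T n s *
          Set.indicator (Set.Ioc (t j.castSucc) (t j.succ)) (fun _ => (1:ℝ)) s| :=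
        Finset.abs_sum_le_sum_abs _ _
    _ ≤ ∑ j, max (C j) 0 * (T / n) := by
        refine Finset.sum_le_sum fun j _ => ?_
        rw [abs_mul]
        exact mul_le_mul (le_trans (hC j ω) (le_max_left _ _))
          (integral_delta_indicator T hT n hn _ _ (h0j j) (hjj j) (hjT j))
          (abs_nonneg _) (le_max_right _ _)
    _ = (∑ j, max (C j) 0) * T / n := by
        simp_rw [← mul_div_assoc]
        rw [← Finset.sum_div, Finset.sum_mul]

lemma step_uncurry_measurable (T : ℝ) {ζ : ℝ → Ω → ℝ} (hζ : IsStepProcess T ζ) :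
    Measurable (Function.uncurry ζ) := by
  obtain ⟨N, t, ξ, -, -, -, hmeas, -, hrep⟩ := hζ
  have : Function.uncurry ζ = fun p : ℝ × Ω =>
      ∑ j, ξ j p.2 * Set.indicator (Set.Ioc (t j.castSucc) (t j.succ)) (fun _ => (1:ℝ)) p.1 := by
    funext p
    exact hrep p.1 p.2
  rw [this]
  exact Finset.measurable_sum _ fun j _ =>
    ((hmeas j).comp measurable_snd).mul
      ((measurable_const.indicator measurableSet_Ioc).comp measurable_fst)

lemma step_bdd (T : ℝ) {ζ : ℝ → Ω → ℝ} (hζ : IsStepProcess T ζ) :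
    ∃ B : ℝ, 0 ≤ B ∧ ∀ s ω, |ζ s ω| ≤ B := by
  obtain ⟨N, t, ξ, -, -, -, -, hbdd, hrep⟩ := hζ
  choose C hC using hbdd
  refine ⟨∑ j, max (C j) 0, Finset.sum_nonneg fun j _ => le_max_right _ _, fun s ω => ?_⟩
  rw [hrep s ω]
  refine le_trans (Finset.abs_sum_le_sum_abs _ _) (Finset.sum_le_sum fun j _ => ?_)
  rw [abs_mul]
  calc |ξ j ω| * |Set.indicator _ (fun _ => (1:ℝ)) s|
      ≤ max (C j) 0 * 1 := mul_le_mul (le_trans (hC j ω) (le_max_left _ _))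
        (abs_indicator_one_le _ s) (abs_nonneg _) (le_max_right _ _)
    _ = max (C j) 0 := mul_one _

lemma absE_bound (𝔓 : Set (Measure Ω)) (hprob : ∀ P ∈ 𝔓, IsProbabilityMeasure P)
    (T : ℝ) (hT : 0 < T) (n : ℕ) (h ζ : ℝ → Ω → ℝ)
    (hmeas_h : Measurable (Function.uncurry h))
    (hM1 : M1norm 𝔓 T h < ⊤)
    (hζstep : IsStepProcess T ζ)
    (ε2 : ℝ) (hε2 : 0 ≤ ε2)
    (hζnorm : M1norm 𝔓 T (fun t ω => h t ω - ζ t ω) ≤ ENNReal.ofReal ε2)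
    (K : ℝ) (hKb : ∀ ω, |∫ s in Set.Ioc (0:ℝ) T, deltaFun T n s * ζ s ω| ≤ K)
    (P : Measure Ω) (hP : P ∈ 𝔓) :
    Integrable (fun ω => ∫ s in Set.Ioc (0:ℝ) T, deltaFun T n s * h s ω) P ∧
    |∫ ω, (∫ s in Set.Ioc (0:ℝ) T, deltaFun T n s * h s ω) ∂P| ≤ K + ε2 := by
  haveI : IsProbabilityMeasure P := hprob P hP
  obtain ⟨B, hB0, hBbd⟩ := step_bdd T hζstep
  have hmeas_ζ : Measurable (Function.uncurry ζ) := step_uncurry_measurable T hζstep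
  have hsmeas_h : ∀ ω, Measurable (fun s => h s ω) := fun ω =>
    hmeas_h.comp (measurable_id.prodMk measurable_const)
  have hsmeas_ζ : ∀ ω, Measurable (fun s => ζ s ω) := fun ω =>
    hmeas_ζ.comp (measurable_id.prodMk measurable_const)
  set vℓ : Ω → ℝ≥0∞ := fun ω => ∫⁻ s in Set.Ioc (0:ℝ) T, ENNReal.ofReal |h s ω| with hvℓ
  set uℓ : Ω → ℝ≥0∞ := fun ω =>
    ∫⁻ s in Set.Ioc (0:ℝ) T, ENNReal.ofReal |h s ω - ζ s ω| with huℓ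
  have hvmeas : Measurable vℓ := by
    apply Measurable.lintegral_prod_right (f := fun ω s => ENNReal.ofReal |h s ω|)
    exact ENNReal.measurable_ofReal.comp ((hmeas_h.comp measurable_swap).abs)
  have humeas : Measurable uℓ := by
    apply Measurable.lintegral_prod_right (f := fun ω s => ENNReal.ofReal |h s ω - ζ s ω|)
    exact ENNReal.measurable_ofReal.comp
      (((hmeas_h.sub hmeas_ζ).comp measurable_swap).abs)
  have hvle : ∫⁻ ω, vℓ ω ∂P ≤ M1norm 𝔓 T h :=
    le_iSup (fun Q : 𝔓 => ∫⁻ ω, vℓ ω ∂(Q : Measure Ω)) ⟨P, hP⟩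
  have hule : ∫⁻ ω, uℓ ω ∂P ≤ ENNReal.ofReal ε2 := le_trans
    (le_iSup (fun Q : 𝔓 => ∫⁻ ω, uℓ ω ∂(Q : Measure Ω)) ⟨P, hP⟩) hζnorm
  have hvae : ∀ᵐ ω ∂P, vℓ ω < ⊤ :=
    ae_lt_top hvmeas (ne_top_of_le_ne_top hM1.ne hvle)
  have huae : ∀ᵐ ω ∂P, uℓ ω < ⊤ :=
    ae_lt_top humeas (ne_top_of_le_ne_top ENNReal.ofReal_ne_top hule)
  set u : Ω → ℝ := fun ω => (uℓ ω).toReal with hu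
  have hu_int : Integrable u P :=
    integrable_toReal_of_lintegral_ne_top humeas.aemeasurable
      (ne_top_of_le_ne_top ENNReal.ofReal_ne_top hule)
  have hu_exp : ∫ ω, u ω ∂P ≤ ε2 := by
    rw [hu, integral_toReal humeas.aemeasurable huae]
    calc (∫⁻ ω, uℓ ω ∂P).toReal ≤ (ENNReal.ofReal ε2).toReal :=
          ENNReal.toReal_mono ENNReal.ofReal_ne_top hule
      _ = ε2 := ENNReal.toReal_ofReal hε2
  set F : Ω → ℝ := fun ω => ∫ s in Set.Ioc (0:ℝ) T, deltaFun T n s * h s ω with hF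
  have hFmeas : StronglyMeasurable F := by
    have := MeasureTheory.StronglyMeasurable.integral_prod_right'
      (ν := volume.restrict (Set.Ioc (0:ℝ) T))
      (f := fun p : Ω × ℝ => deltaFun T n p.2 * h p.2 p.1)
      ((((deltaFun_measurable T n).comp measurable_snd).mul
        (hmeas_h.comp measurable_swap)).stronglyMeasurable)
    exact this
  have hv_int : Integrable (fun ω => (vℓ ω).toReal) P :=
    integrable_toReal_of_lintegral_ne_top hvmeas.aemeasurable
      (ne_top_of_le_ne_top hM1.ne hvle)
  have hFle : ∀ᵐ ω ∂P, ‖F ω‖ ≤ (vℓ ω).toReal := by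
    filter_upwards [hvae] with ω hω
    calc ‖F ω‖ ≤ (∫⁻ s in Set.Ioc (0:ℝ) T,
            ENNReal.ofReal ‖deltaFun T n s * h s ω‖).toReal :=
          norm_integral_le_lintegral_norm _
      _ ≤ (vℓ ω).toReal := by
          apply ENNReal.toReal_mono hω.ne
          refine lintegral_mono fun s => ENNReal.ofReal_le_ofReal ?_
          rw [Real.norm_eq_abs, abs_mul]
          have h1 := deltaFun_abs_le T n s
          have h2 := abs_nonneg (h s ω)
          nlinarith [abs_nonneg (deltaFun T n s)]
  have hF_int : Integrable F P :=
    Integrable.mono' hv_int hFmeas.aestronglyMeasurable hFle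
  have hFbd : ∀ᵐ ω ∂P, |F ω| ≤ K + u ω := by
    filter_upwards [hvae, huae] with ω hv hu'
    have hint_h : IntegrableOn (fun s => h s ω) (Set.Ioc (0:ℝ) T) volume := by
      refine ⟨(hsmeas_h ω).aestronglyMeasurable, ?_⟩
      rw [hasFiniteIntegral_iff_norm]
      simpa only [Real.norm_eq_abs] using hv
    have hint_ζ : IntegrableOn (fun s => ζ s ω) (Set.Ioc (0:ℝ) T) volume :=
      integrableOn_bdd (hsmeas_ζ ω) (fun s => hBbd s ω) 0 T
    have hint_sub : IntegrableOn (fun s => h s ω - ζ s ω) (Set.Ioc (0:ℝ) T) volume :=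
      hint_h.sub hint_ζ
    have hint_dz : IntegrableOn (fun s => deltaFun T n s * ζ s ω)
        (Set.Ioc (0:ℝ) T) volume := by
      refine integrableOn_bdd ((deltaFun_measurable T n).mul (hsmeas_ζ ω))
        (C := B) (fun s => ?_) 0 T
      rw [Pi.mul_apply, abs_mul]
      calc |deltaFun T n s| * |ζ s ω| ≤ 1 * B :=
            mul_le_mul (deltaFun_abs_le T n s) (hBbd s ω) (abs_nonneg _) zero_le_one
        _ = B := one_mul B
    have hint_ds : IntegrableOn (fun s => deltaFun T n s * (h s ω - ζ s ω))
        (Set.Ioc (0:ℝ) T) volume := by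
      refine Integrable.mono' hint_sub.abs
        (((deltaFun_measurable T n).mul ((hsmeas_h ω).sub (hsmeas_ζ ω))).aestronglyMeasurable)
        (ae_of_all _ fun s => ?_)
      rw [Real.norm_eq_abs, abs_mul]
      have h1 := deltaFun_abs_le T n s
      have h2 := abs_nonneg (h s ω - ζ s ω)
      nlinarith [abs_nonneg (deltaFun T n s)]
    have hsplit : F ω = (∫ s in Set.Ioc (0:ℝ) T, deltaFun T n s * ζ s ω)
        + ∫ s in Set.Ioc (0:ℝ) T, deltaFun T n s * (h s ω - ζ s ω) := by
      rw [hF, ← integral_add hint_dz hint_ds]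
      exact integral_congr_ae (ae_of_all _ fun s => by ring)
    have habs2 : |∫ s in Set.Ioc (0:ℝ) T, deltaFun T n s * (h s ω - ζ s ω)| ≤ u ω := by
      calc |∫ s in Set.Ioc (0:ℝ) T, deltaFun T n s * (h s ω - ζ s ω)|
          ≤ ∫ s in Set.Ioc (0:ℝ) T, |deltaFun T n s * (h s ω - ζ s ω)| := by
            simpa only [Real.norm_eq_abs] using
              norm_integral_le_integral_norm
                (fun s => deltaFun T n s * (h s ω - ζ s ω))
                (μ := volume.restrict (Set.Ioc (0:ℝ) T))
        _ ≤ ∫ s in Set.Ioc (0:ℝ) T, |h s ω - ζ s ω| := by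
            refine integral_mono hint_ds.abs hint_sub.abs fun s => ?_
            rw [abs_mul]
            have h1 := deltaFun_abs_le T n s
            have h2 := abs_nonneg (h s ω - ζ s ω)
            nlinarith [abs_nonneg (deltaFun T n s)]
        _ = u ω := by
            rw [hu, huℓ]
            rw [integral_eq_lintegral_of_nonneg_ae (f := fun s => |h s ω - ζ s ω|)
              (ae_of_all _ fun s => abs_nonneg _)
              (((hsmeas_h ω).sub (hsmeas_ζ ω)).abs.aestronglyMeasurable)]
    calc |F ω| ≤ |∫ s in Set.Ioc (0:ℝ) T, deltaFun T n s * ζ s ω|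
          + |∫ s in Set.Ioc (0:ℝ) T, deltaFun T n s * (h s ω - ζ s ω)| := by
          rw [hsplit]; exact abs_add_le _ _
      _ ≤ K + u ω := add_le_add (hKb ω) habs2
  refine ⟨hF_int, ?_⟩
  calc |∫ ω, F ω ∂P| ≤ ∫ ω, |F ω| ∂P := by
        simpa only [Real.norm_eq_abs] using norm_integral_le_integral_norm F (μ := P)
    _ ≤ ∫ ω, (K + u ω) ∂P :=
        integral_mono_ae hF_int.abs ((integrable_const K).add hu_int) hFbd
    _ = K + ∫ ω, u ω ∂P := by
        rw [integral_add (integrable_const K) hu_int, integral_const, probReal_univ]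
        simp
    _ ≤ K + ε2 := add_le_add le_rfl hu_exp

/-- for every `h ∈ M¹(𝔓)`, `Ê(∫₀ᵀ δ_n(s) h_s ds) → 0` as `n → ∞`. -/
theorem stmt7 (𝔓 : Set (Measure Ω)) (h𝔓 : 𝔓.Nonempty)
    (hprob : ∀ P ∈ 𝔓, IsProbabilityMeasure P)
    (T : ℝ) (hT : 0 < T)
    (h : ℝ → Ω → ℝ) (hh : MemM1 𝔓 T h) :
    Tendsto
      (fun n : ℕ =>
        sublinearE 𝔓 (fun ω => ∫ s in Set.Ioc (0:ℝ) T, deltaFun T n s * h s ω))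
      atTop (nhds 0) := by
  obtain ⟨hmeas_h, hM1, happrox⟩ := hh
  haveI : Nonempty ↥𝔓 := h𝔓.to_subtype
  rw [Metric.tendsto_atTop]
  intro ε hε
  obtain ⟨ζ, hζstep, hζnorm⟩ :=
    happrox (ENNReal.ofReal (ε/2)) (ENNReal.ofReal_pos.2 (by linarith))
  obtain ⟨K, hK0, hKbound⟩ := step_bound T hT hζstep
  have htend : Tendsto (fun n : ℕ => K / n) atTop (nhds 0) :=
    tendsto_const_div_atTop_nhds_zero_nat K
  have hev : ∀ᶠ n : ℕ in atTop, K / n < ε/2 :=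
    htend.eventually (eventually_lt_nhds (show (0:ℝ) < ε/2 by linarith))
  obtain ⟨N, hN⟩ := Filter.eventually_atTop.1 (hev.and (eventually_ge_atTop 1))
  refine ⟨N, fun n hn => ?_⟩
  obtain ⟨hKn, hn1⟩ := hN n hn
  rw [Real.dist_eq, sub_zero]
  have hbound := fun (P : ↥𝔓) => (absE_bound 𝔓 hprob T hT n h ζ hmeas_h hM1 hζstep
    (ε/2) (by linarith) hζnorm.le (K/n) (fun ω => hKbound n hn1 ω)
    (P : Measure Ω) P.2).2
  have hub : ∀ P : ↥𝔓,
      (∫ ω, (∫ s in Set.Ioc (0:ℝ) T, deltaFun T n s * h s ω) ∂(P : Measure Ω))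
        ≤ K/n + ε/2 := fun P => le_trans (le_abs_self _) (hbound P)
  have hlb : ∀ P : ↥𝔓, -(K/n + ε/2)
      ≤ ∫ ω, (∫ s in Set.Ioc (0:ℝ) T, deltaFun T n s * h s ω) ∂(P : Measure Ω) :=
    fun P => neg_le_of_abs_le (hbound P)
  have hbdd : BddAbove (Set.range fun P : ↥𝔓 =>
      ∫ ω, (∫ s in Set.Ioc (0:ℝ) T, deltaFun T n s * h s ω) ∂(P : Measure Ω)) := by
    refine ⟨K/n + ε/2, ?_⟩
    rintro y ⟨P, rfl⟩
    exact hub P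
  have hxle : sublinearE 𝔓 (fun ω => ∫ s in Set.Ioc (0:ℝ) T, deltaFun T n s * h s ω)
      ≤ K/n + ε/2 := ciSup_le hub
  have hxge : -(K/n + ε/2)
      ≤ sublinearE 𝔓 (fun ω => ∫ s in Set.Ioc (0:ℝ) T, deltaFun T n s * h s ω) := by
    obtain ⟨P₀⟩ := (inferInstance : Nonempty ↥𝔓)
    exact le_trans (hlb P₀) (le_ciSup hbdd P₀)
  rw [abs_lt]
  constructor <;> [linarith; linarith]
end
end
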